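/- arXiv:2307.03064 — 9 statements merged into one kernel-verified Lean document; each statement's English description precedes it below -/
import Mathlib

section
/- Every positive semidefinite block matrix [[A, X],[X*, B]] in M_{n+m}(ℂ) (with A ∈ M_n, B ∈ M_m) can be decomposed as U (A ⊕ 0) U* + V (0 ⊕ B) V* for some unitary matrices U, V ∈ M_{n+m}(ℂ). -/
/-!
Write `M = S * S` with `S = √M` Hermitian and let `P` be the orthogonal projection onto the first
summand, so that `M = S P S + S (1 - P) S`. For any square `T`, the Hermitian matrices `T Tᴴ` and
`Tᴴ T` have the same characteristic polynomial, hence are unitarily similar. Taking `T = S P` turns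
`S P S` into `P M P = A ⊕ 0`, and `T = S (1 - P)` turns `S (1 - P) S` into `0 ⊕ B`.
-/

open Matrix ComplexOrder

namespace Matrix

variable {ι 𝕜 : Type*} [Fintype ι] [DecidableEq ι] [RCLike 𝕜]

theorem IsHermitian.exists_unitary_conj_of_charpoly_eq {A B : Matrix ι ι 𝕜}
    (hA : A.IsHermitian) (hB : B.IsHermitian) (h : A.charpoly = B.charpoly) :
    ∃ U ∈ unitaryGroup ι 𝕜, A = U * B * Uᴴ := by
  set UA : Matrix ι ι 𝕜 := ↑hA.eigenvectorUnitary
  set UB : Matrix ι ι 𝕜 := ↑hB.eigenvectorUnitary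
  set D : Matrix ι ι 𝕜 := diagonal (RCLike.ofReal ∘ hB.eigenvalues)
  have hA' : A = UA * D * UAᴴ := by
    have hAspec := hA.spectral_theorem
    rwa [(hA.eigenvalues_eq_eigenvalues_iff hB).2 h] at hAspec
  have hB' : B = UB * D * UBᴴ := hB.spectral_theorem
  have hUB : UBᴴ * UB = 1 := mem_unitaryGroup_iff'.mp hB.eigenvectorUnitary.2
  refine ⟨UA * UBᴴ,
    mul_mem hA.eigenvectorUnitary.2 (Unitary.star_mem hB.eigenvectorUnitary.2), ?_⟩
  rw [hA', hB', conjTranspose_mul, conjTranspose_conjTranspose]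
  simp only [Matrix.mul_assoc, ← Matrix.mul_assoc UBᴴ UB, hUB, Matrix.one_mul]

theorem exists_unitary_mul_conjTranspose_self_eq (T : Matrix ι ι 𝕜) :
    ∃ U ∈ unitaryGroup ι 𝕜, T * Tᴴ = U * (Tᴴ * T) * Uᴴ :=
  (isHermitian_mul_conjTranspose_self T).exists_unitary_conj_of_charpoly_eq
    (isHermitian_conjTranspose_mul_self T) (charpoly_mul_comm _ _)

open scoped MatrixOrder in
theorem PosSemidef.exists_unitary_conj_add_unitary_conj {M P : Matrix ι ι 𝕜} (hM : M.PosSemidef)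
    (hP : IsStarProjection P) :
    ∃ U ∈ unitaryGroup ι 𝕜, ∃ V ∈ unitaryGroup ι 𝕜,
      M = U * (P * M * P) * Uᴴ + V * ((1 - P) * M * (1 - P)) * Vᴴ := by
  set S := CFC.sqrt M
  have hSS : S * S = M := CFC.sqrt_mul_sqrt_self M hM.nonneg
  have hSH : Sᴴ = S := (CFC.sqrt_nonneg M).posSemidef.1
  -- `S * Q * S` and `Q * M * Q` are `T * Tᴴ` and `Tᴴ * T` for `T = S * Q`.
  have conj : ∀ Q : Matrix ι ι 𝕜, IsStarProjection Q →
      ∃ U ∈ unitaryGroup ι 𝕜, S * Q * S = U * (Q * M * Q) * Uᴴ := by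
    intro Q hQ
    have hQH : Qᴴ = Q := hQ.isSelfAdjoint
    obtain ⟨U, hU, hUT⟩ := exists_unitary_mul_conjTranspose_self_eq (S * Q)
    refine ⟨U, hU, ?_⟩
    simpa only [conjTranspose_mul, hSH, hQH, Matrix.mul_assoc, ← Matrix.mul_assoc Q Q,
      hQ.isIdempotentElem.eq, ← Matrix.mul_assoc S S, hSS] using hUT
  obtain ⟨U, hU, hPU⟩ := conj P hP
  obtain ⟨V, hV, hPV⟩ := conj (1 - P) hP.one_sub
  refine ⟨U, hU, V, hV, ?_⟩
  rw [← hPU, ← hPV, ← Matrix.add_mul, ← Matrix.mul_add, add_sub_cancel, Matrix.mul_one, hSS]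

end Matrix

/-- **Decomposition of positive block matrices (Bourin–Lee).** Every positive
semidefinite block matrix `[[A, X],[X*, B]]` decomposes as
`U (A ⊕ 0) U* + V (0 ⊕ B) V*` for some unitaries `U, V`. -/
theorem posSemidef_block_decomposition {n m : ℕ}
    {A : Matrix (Fin n) (Fin n) ℂ} {B : Matrix (Fin m) (Fin m) ℂ}
    {X : Matrix (Fin n) (Fin m) ℂ}
    (h : (Matrix.fromBlocks A X Xᴴ B).PosSemidef) :
    ∃ U V : Matrix (Fin n ⊕ Fin m) (Fin n ⊕ Fin m) ℂ,
      U ∈ Matrix.unitaryGroup (Fin n ⊕ Fin m) ℂ ∧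
      V ∈ Matrix.unitaryGroup (Fin n ⊕ Fin m) ℂ ∧
      Matrix.fromBlocks A X Xᴴ B =
        U * Matrix.fromBlocks A 0 0 0 * Uᴴ + V * Matrix.fromBlocks 0 0 0 B * Vᴴ := by
  set P : Matrix (Fin n ⊕ Fin m) (Fin n ⊕ Fin m) ℂ := fromBlocks 1 0 0 0
  have hP : IsStarProjection P := by
    rw [isStarProjection_iff']
    simp [P, fromBlocks_multiply, star_eq_conjTranspose, fromBlocks_conjTranspose]
  have hQ : 1 - P = fromBlocks 0 0 0 1 := by
    ext (i | i) (j | j) <;> simp [P, one_apply]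
  obtain ⟨U, hU, V, hV, hUV⟩ := h.exists_unitary_conj_add_unitary_conj hP
  refine ⟨U, V, hU, hV, ?_⟩
  simpa [hQ, P, fromBlocks_multiply] using hUV
end

section
/- Let [[A, X],[X*, B]] ∈ M_{2n}(ℂ) be positive semidefinite with all four blocks in M_n. Then there exist unitaries U, V ∈ M_{2n}(ℂ) such that [[A, X],[X*, B]] = U ((A+B)/2 + Re X) ⊕ 0) U* + V (0 ⊕ ((A+B)/2 − Re X)) V*, where Re X = (X + X*)/2. -/
open Matrix ComplexOrder
open scoped MatrixOrder

/-!
Conjugating by the unitary `W = (1/√2) [[1, -1], [1, 1]]` turns the block matrix into a positive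
semidefinite `N` whose diagonal blocks are `(A + B)/2 ± Re X`. With `C = √N` and `E₁, E₂` the
coordinate projections, `N = C E₁ C + C E₂ C`, and `C Eᵢ C = Fᵢ Fᵢᴴ` for `Fᵢ = C Eᵢ`. Now `Fᵢ Fᵢᴴ`
and `Fᵢᴴ Fᵢ = Eᵢ N Eᵢ` are Hermitian with the same characteristic polynomial, hence unitarily
similar, and `Eᵢ N Eᵢ` is the `i`-th diagonal block padded by zeros.
-/

theorem RCLike.inv_ofReal_sqrt_two_mul_self {𝕜 : Type*} [RCLike 𝕜] :
    ((√2 : ℝ) : 𝕜)⁻¹ * ((√2 : ℝ) : 𝕜)⁻¹ = 1 / 2 := by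
  rw [← mul_inv, ← RCLike.ofReal_mul, Real.mul_self_sqrt zero_le_two, RCLike.ofReal_ofNat, one_div]

namespace Matrix

variable {m n 𝕜 : Type*} [RCLike 𝕜]

section Square

variable [Fintype n] [DecidableEq n]

theorem IsHermitian.exists_unitary_eq_conj_of_charpoly_eq {A B : Matrix n n 𝕜}
    (hA : A.IsHermitian) (hB : B.IsHermitian) (h : A.charpoly = B.charpoly) :
    ∃ U ∈ unitaryGroup n 𝕜, A = U * B * Uᴴ := by
  have heig : hA.eigenvalues = hB.eigenvalues := (hA.eigenvalues_eq_eigenvalues_iff hB).mpr h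
  set U := hA.eigenvectorUnitary * star hB.eigenvectorUnitary
  refine ⟨U, U.prop, ?_⟩
  rw [hA.spectral_theorem, heig, ← hB.conjStarAlgAut_star_eigenvectorUnitary,
    ← Unitary.conjStarAlgAut_mul_apply, Unitary.conjStarAlgAut_apply, star_eq_conjTranspose]

theorem exists_unitary_mul_conjTranspose_eq (F : Matrix n n 𝕜) :
    ∃ U ∈ unitaryGroup n 𝕜, F * Fᴴ = U * (Fᴴ * F) * Uᴴ :=
  (isHermitian_mul_conjTranspose_self F).exists_unitary_eq_conj_of_charpoly_eq
    (isHermitian_conjTranspose_mul_self F) (charpoly_mul_comm F Fᴴ)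

theorem PosSemidef.exists_unitary_sqrt_mul_mul_sqrt_eq {N E : Matrix n n 𝕜} (hN : N.PosSemidef)
    (hE : IsStarProjection E) :
    ∃ U ∈ unitaryGroup n 𝕜, CFC.sqrt N * E * CFC.sqrt N = U * (E * N * E) * Uᴴ := by
  set C := CFC.sqrt N
  have hC : Cᴴ = C := (CFC.sqrt_nonneg N).posSemidef.isHermitian
  have hE' : Eᴴ = E := hE.isSelfAdjoint
  have hFFH : C * E * (C * E)ᴴ = C * E * C := by
    rw [conjTranspose_mul, hC, hE', ← mul_assoc, mul_assoc C E E, hE.isIdempotentElem.eq]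
  have hFHF : (C * E)ᴴ * (C * E) = E * N * E := by
    rw [conjTranspose_mul, hC, hE', mul_assoc, ← mul_assoc C C, CFC.sqrt_mul_sqrt_self N hN.nonneg,
      mul_assoc]
  rw [← hFFH, ← hFHF]
  exact exists_unitary_mul_conjTranspose_eq (C * E)

end Square

section Blocks

variable [Fintype m] [Fintype n] [DecidableEq m] [DecidableEq n]

theorem isStarProjection_fromBlocks_one_zero_zero_zero :
    IsStarProjection (fromBlocks 1 0 0 0 : Matrix (m ⊕ n) (m ⊕ n) 𝕜) :=
  ⟨by simp [IsIdempotentElem, fromBlocks_multiply],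
    by simp [IsSelfAdjoint, star_eq_conjTranspose, fromBlocks_conjTranspose]⟩

theorem isStarProjection_fromBlocks_zero_zero_zero_one :
    IsStarProjection (fromBlocks 0 0 0 1 : Matrix (m ⊕ n) (m ⊕ n) 𝕜) :=
  ⟨by simp [IsIdempotentElem, fromBlocks_multiply],
    by simp [IsSelfAdjoint, star_eq_conjTranspose, fromBlocks_conjTranspose]⟩

theorem PosSemidef.exists_unitary_fromBlocks_eq_add
    {P : Matrix m m 𝕜} {Y : Matrix m n 𝕜} {Z : Matrix n m 𝕜} {Q : Matrix n n 𝕜}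
    (h : (fromBlocks P Y Z Q).PosSemidef) :
    ∃ U V : Matrix (m ⊕ n) (m ⊕ n) 𝕜, U ∈ unitaryGroup (m ⊕ n) 𝕜 ∧ V ∈ unitaryGroup (m ⊕ n) 𝕜 ∧
      fromBlocks P Y Z Q = U * fromBlocks P 0 0 0 * Uᴴ + V * fromBlocks 0 0 0 Q * Vᴴ := by
  obtain ⟨U, hU, hCU⟩ :=
    h.exists_unitary_sqrt_mul_mul_sqrt_eq isStarProjection_fromBlocks_one_zero_zero_zero
  obtain ⟨V, hV, hCV⟩ :=
    h.exists_unitary_sqrt_mul_mul_sqrt_eq isStarProjection_fromBlocks_zero_zero_zero_one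
  refine ⟨U, V, hU, hV, ?_⟩
  simp only [fromBlocks_multiply, Matrix.one_mul, Matrix.zero_mul, Matrix.mul_one,
    Matrix.mul_zero, add_zero, zero_add] at hCU hCV
  rw [← hCU, ← hCV, ← add_mul, ← mul_add, fromBlocks_add]
  simp only [add_zero, zero_add, fromBlocks_one, Matrix.mul_one]
  exact (CFC.sqrt_mul_sqrt_self _ h.nonneg).symm

end Blocks

section Hadamard

variable [DecidableEq n]

variable (n 𝕜) in
noncomputable def blockHadamard : Matrix (n ⊕ n) (n ⊕ n) 𝕜 :=
  ((√2 : ℝ) : 𝕜)⁻¹ • fromBlocks 1 (-1) 1 1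

theorem conjTranspose_blockHadamard :
    (blockHadamard n 𝕜)ᴴ = ((√2 : ℝ) : 𝕜)⁻¹ • fromBlocks 1 1 (-1) 1 := by
  simp [blockHadamard, conjTranspose_smul, fromBlocks_conjTranspose]

variable [Fintype n]

theorem blockHadamard_mem_unitaryGroup : blockHadamard n 𝕜 ∈ unitaryGroup (n ⊕ n) 𝕜 := by
  rw [mem_unitaryGroup_iff', star_eq_conjTranspose, conjTranspose_blockHadamard, blockHadamard,
    smul_mul_smul_comm, RCLike.inv_ofReal_sqrt_two_mul_self, fromBlocks_multiply,
    ← fromBlocks_one, fromBlocks_smul, fromBlocks_inj]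
  simp only [Matrix.mul_one, Matrix.mul_neg]
  exact ⟨by module, by module, by module, by module⟩

theorem conjTranspose_blockHadamard_mul_fromBlocks_mul_blockHadamard (A X Z B : Matrix n n 𝕜) :
    (blockHadamard n 𝕜)ᴴ * fromBlocks A X Z B * blockHadamard n 𝕜 =
      fromBlocks ((1 / 2 : 𝕜) • (A + B) + (1 / 2 : 𝕜) • (X + Z)) ((1 / 2 : 𝕜) • (X + B - A - Z))
        ((1 / 2 : 𝕜) • (Z + B - A - X)) ((1 / 2 : 𝕜) • (A + B) - (1 / 2 : 𝕜) • (X + Z)) := by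
  rw [conjTranspose_blockHadamard, blockHadamard, smul_mul_assoc, smul_mul_smul_comm,
    RCLike.inv_ofReal_sqrt_two_mul_self, fromBlocks_multiply, fromBlocks_multiply,
    fromBlocks_smul, fromBlocks_inj]
  simp only [Matrix.one_mul, Matrix.mul_one, Matrix.neg_mul, Matrix.mul_neg]
  exact ⟨by module, by module, by module, by module⟩

end Hadamard

end Matrix

/-- **Decomposition with the real part of the off-diagonal block (Bourin–Lee–Lin).**
A positive semidefinite `[[A, X],[X*, B]]` with blocks in `M_n` equals
`U (((A+B)/2 + Re X) ⊕ 0) U* + V (0 ⊕ ((A+B)/2 − Re X)) V*` for some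
unitaries `U, V`, where `Re X = (X + X*)/2`. -/
theorem posSemidef_block_decomposition_re {n : ℕ}
    {A B X : Matrix (Fin n) (Fin n) ℂ}
    (h : (Matrix.fromBlocks A X Xᴴ B).PosSemidef) :
    ∃ U V : Matrix (Fin n ⊕ Fin n) (Fin n ⊕ Fin n) ℂ,
      U ∈ Matrix.unitaryGroup (Fin n ⊕ Fin n) ℂ ∧
      V ∈ Matrix.unitaryGroup (Fin n ⊕ Fin n) ℂ ∧
      Matrix.fromBlocks A X Xᴴ B =
        U * Matrix.fromBlocks ((1 / 2 : ℂ) • (A + B) + (1 / 2 : ℂ) • (X + Xᴴ)) 0 0 0 * Uᴴ +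
        V * Matrix.fromBlocks 0 0 0 ((1 / 2 : ℂ) • (A + B) - (1 / 2 : ℂ) • (X + Xᴴ)) * Vᴴ := by
  set W := blockHadamard (Fin n) ℂ
  have hW : W ∈ unitaryGroup (Fin n ⊕ Fin n) ℂ := blockHadamard_mem_unitaryGroup
  have hWWH : W * Wᴴ = 1 := mem_unitaryGroup_iff.mp hW
  have hN := h.conjTranspose_mul_mul_same W
  rw [conjTranspose_blockHadamard_mul_fromBlocks_mul_blockHadamard] at hN
  obtain ⟨U, V, hU, hV, hUV⟩ := hN.exists_unitary_fromBlocks_eq_add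
  refine ⟨W * U, W * V, mul_mem hW hU, mul_mem hW hV, ?_⟩
  calc fromBlocks A X Xᴴ B = W * (Wᴴ * fromBlocks A X Xᴴ B * W) * Wᴴ := by
        simp only [← mul_assoc, hWWH, Matrix.one_mul]
        simp only [mul_assoc, hWWH, Matrix.mul_one]
    _ = _ := by
        rw [conjTranspose_blockHadamard_mul_fromBlocks_mul_blockHadamard, hUV]
        simp only [conjTranspose_mul, Matrix.mul_add, Matrix.add_mul, mul_assoc]
end

section
/- Let f be a nonnegative concave function on [0,∞) and let [[A, X],[X*, B]] be a positive semidefinite block matrix with A ∈ M_n^+, B ∈ M_m^+. Then for every unitarily invariant norm, ‖f([[A, X],[X*, B]])‖ ≤ ‖f(A)‖ + ‖f(B)‖. -/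
/-!
Let `g = f(H)^{1/2}` and let `P`, `Q` be the projections onto the two blocks, so that
`f(H) = gPg + gQg` and `N(f(H)) ≤ N(gPg) + N(gQg)`. With `R = Pg`, the matrix `gPg = RᴴR` has,
in decreasing order, eigenvalues at most those of `RRᴴ = P f(H) P = f(H)₁₁ ⊕ 0`. For each `j`,
a supergradient of `f` at `t = λⱼ(A)` gives `f(H) ≤ α + sH` with `s ≥ 0` and `α + st = f(t)`;
compressing to the first block and applying Weyl monotonicity yields `λⱼ(f(H)₁₁) ≤ f(λⱼ(A))`.
Hence the eigenvalues of `gPg` are dominated one by one by those of `f(A) ⊕ 0`, and between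
positive matrices such a domination passes to every unitarily invariant norm: if `0 ≤ μᵢ ≤ νᵢ`
then `diag μ = ½ (U + U*) diag ν` for a diagonal unitary `U`. The block `B` is the same
argument after swapping the blocks.
-/

open Matrix ComplexOrder

lemma ConcaveOn.monotoneOn_of_nonneg {f : ℝ → ℝ} (hf : ConcaveOn ℝ (Set.Ici 0) f)
    (hf0 : ∀ x, 0 ≤ x → 0 ≤ f x) : MonotoneOn f (Set.Ici 0) := by
  intro x hx y hy hxy
  rcases hxy.eq_or_lt with rfl | hxy
  · exact le_rfl
  by_contra! hlt
  -- by concavity the negative slope `σ` on `[x, y]` bounds every slope to the right of `y`,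
  -- which drives `f` below zero at `z`
  set σ := (f y - f x) / (y - x)
  have hσ : σ < 0 := div_neg_of_neg_of_pos (by linarith) (by linarith)
  set z := y - f y / σ + 1
  have hyz : y < z := by
    have : f y / σ ≤ 0 := div_nonpos_of_nonneg_of_nonpos (hf0 y hy) hσ.le
    linarith
  have hz : z ∈ Set.Ici (0 : ℝ) := Set.mem_Ici.2 (le_trans (Set.mem_Ici.1 hy) hyz.le)
  have hslope := hf.slope_anti_adjacent hx hz hxy hyz
  rw [div_le_iff₀ (by linarith), show z - y = 1 - f y / σ by ring, mul_sub, mul_one,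
    mul_div_cancel₀ _ hσ.ne] at hslope
  linarith [hf0 z hz]

lemma ConcaveOn.exists_supergradient_of_finite {f : ℝ → ℝ} (hf : ConcaveOn ℝ (Set.Ici 0) f)
    (hf0 : ∀ x, 0 ≤ x → 0 ≤ f x) {S : Set ℝ} (hS : S.Finite) (hS0 : S ⊆ Set.Ici 0) {t : ℝ}
    (ht : 0 ≤ t) : ∃ s, 0 ≤ s ∧ ∀ x ∈ S, f x ≤ f t + s * (x - t) := by
  -- `s` is the largest slope from `t` to a point of `S` on its right, or `0` if there is none
  set E := insert 0 ((fun x => (f x - f t) / (x - t)) '' {x ∈ S | t < x})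
  have hE : E.Finite := ((hS.subset (Set.sep_subset S _)).image _).insert 0
  set s := sSup E
  have hle : ∀ e ∈ E, e ≤ s := fun e he => le_csSup hE.bddAbove he
  have hs : s ∈ E := (Set.insert_nonempty _ _).csSup_mem hE
  refine ⟨s, hle 0 (Set.mem_insert _ _), fun x hx => ?_⟩
  rcases lt_trichotomy t x with htx | rfl | hxt
  · have h := hle _ (Set.mem_insert_of_mem _ ⟨x, ⟨hx, htx⟩, rfl⟩)
    rw [div_le_iff₀ (sub_pos.2 htx)] at h
    linarith
  · simp
  · rcases hs with hs0 | ⟨z, ⟨hzS, htz⟩, hsz⟩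
    · rw [hs0, zero_mul, add_zero]
      exact hf.monotoneOn_of_nonneg hf0 (hS0 hx) ht hxt.le
    have hslope := hf.slope_anti_adjacent (hS0 hx) (hS0 hzS) hxt htz
    rw [le_div_iff₀ (sub_pos.2 hxt)] at hslope
    rw [← hsz]
    linarith

lemma Complex.exists_norm_eq_one_re_mul_eq {x y : ℝ} (hx : 0 ≤ x) (hxy : x ≤ y) :
    ∃ u : ℂ, ‖u‖ = 1 ∧ u.re * y = x := by
  rcases (hx.trans hxy).eq_or_lt with rfl | hy
  · exact ⟨1, by simp, by simp [le_antisymm hxy hx]⟩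
  refine ⟨Complex.exp (Real.arccos (x / y) * Complex.I), Complex.norm_exp_ofReal_mul_I _, ?_⟩
  rw [Complex.exp_ofReal_mul_I_re, Real.cos_arccos (by linarith [div_nonneg hx hy.le])
    ((div_le_one hy).2 hxy), div_mul_cancel₀ _ hy.ne']

namespace Matrix

section Ordering

variable {ι : Type*} [Fintype ι] {k : ℕ} (κ : ι ≃ Fin k)

lemma card_subtype_lt_apply (j : ι) : Fintype.card {r // κ r < κ j} = κ j := by
  rw [Fintype.card_congr (κ.subtypeEquiv (p := fun r => κ r < κ j) (q := (· < κ j))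
    fun _ => Iff.rfl), Fintype.card_subtype]
  simp [Finset.filter_gt_eq_Iio]

lemma card_subtype_le_apply (j : ι) : Fintype.card {r // κ r ≤ κ j} = κ j + 1 := by
  rw [Fintype.card_congr (κ.subtypeEquiv (p := fun r => κ r ≤ κ j) (q := (· ≤ κ j))
    fun _ => Iff.rfl), Fintype.card_subtype]
  simp [Finset.filter_ge_eq_Iic]

variable {κ} {v : ι → ℝ}

lemma sum_mul_le_mul_sum_of_antitone (hv : Antitone (v ∘ κ.symm)) {j : ι} {w : ι → ℝ}
    (hw0 : ∀ i, 0 ≤ w i) (hw : ∀ i, κ i < κ j → w i = 0) :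
    ∑ i, v i * w i ≤ v j * ∑ i, w i := by
  rw [Finset.mul_sum]
  refine Finset.sum_le_sum fun i _ => ?_
  rcases lt_or_ge (κ i) (κ j) with h | h
  · simp [hw i h]
  · exact mul_le_mul_of_nonneg_right (by simpa using hv h) (hw0 i)

lemma mul_sum_le_sum_mul_of_antitone (hv : Antitone (v ∘ κ.symm)) {j : ι} {w : ι → ℝ}
    (hw0 : ∀ i, 0 ≤ w i) (hw : ∀ i, κ j < κ i → w i = 0) :
    v j * ∑ i, w i ≤ ∑ i, v i * w i := by
  rw [Finset.mul_sum]
  refine Finset.sum_le_sum fun i _ => ?_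
  rcases lt_or_ge (κ j) (κ i) with h | h
  · simp [hw i h]
  · exact mul_le_mul_of_nonneg_right (by simpa using hv h) (hw0 i)

lemma sum_normSq_pos {y : ι → ℂ} (hy : y ≠ 0) : 0 < ∑ i, Complex.normSq (y i) := by
  obtain ⟨i, hi⟩ := Function.ne_iff.1 hy
  exact Finset.sum_pos' (fun _ _ => Complex.normSq_nonneg _)
    ⟨i, Finset.mem_univ _, Complex.normSq_pos.2 hi⟩

lemma star_dotProduct_self_re (y : ι → ℂ) :
    (star y ⬝ᵥ y).re = ∑ i, Complex.normSq (y i) := by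
  simp [dotProduct, Complex.normSq_apply, mul_comm]

lemma star_mulVec_dotProduct_mulVec (R : Matrix ι ι ℂ) (x : ι → ℂ) :
    star (R *ᵥ x) ⬝ᵥ (R *ᵥ x) = star x ⬝ᵥ ((Rᴴ * R) *ᵥ x) := by
  rw [star_mulVec, ← dotProduct_mulVec, mulVec_mulVec]

lemma re_dotProduct_mulVec_le_of_posSemidef_sub {M M' : Matrix ι ι ℂ} (h : (M' - M).PosSemidef)
    (x : ι → ℂ) :
    (star x ⬝ᵥ (M *ᵥ x)).re ≤ (star x ⬝ᵥ (M' *ᵥ x)).re := by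
  have := (Complex.nonneg_iff.1 (h.dotProduct_mulVec_nonneg x)).1
  rw [sub_mulVec, dotProduct_sub, Complex.sub_re] at this
  linarith

lemma antitone_sumElim_zero {ι₁ ι₂ : Type*} {p q : ℕ} {κ₁ : ι₁ ≃ Fin p} {κ₂ : ι₂ ≃ Fin q}
    {c : ι₁ → ℝ} (hc : Antitone (c ∘ κ₁.symm)) (hc0 : ∀ i, 0 ≤ c i) :
    Antitone (Sum.elim c 0 ∘ ((κ₁.sumCongr κ₂).trans finSumFinEquiv).symm) := by
  intro a b hab
  induction a using Fin.addCases with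
  | left a =>
    induction b using Fin.addCases with
    | left b => simpa using hc (show a ≤ b from hab)
    | right b => simpa using hc0 _
  | right a =>
    induction b using Fin.addCases with
    | left b => exact absurd hab (by simp [Fin.le_def]; omega)
    | right b => simp

end Ordering

variable {ι ι' : Type*} [Fintype ι] [DecidableEq ι] [Fintype ι'] [DecidableEq ι']

/-- The eigenvalues are indexed by `ι` itself; that they are listed in decreasing order along an
enumeration `κ : ι ≃ Fin k` is expressed by `Antitone (v ∘ κ.symm)`. -/
def HasEigenvalues (M : Matrix ι ι ℂ) (v : ι → ℝ) : Prop :=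
  ∃ W ∈ unitaryGroup ι ℂ, M = W * diagonal (fun i => (v i : ℂ)) * star W

lemma IsHermitian.cfc_mulVec_of_mulVec_eq_smul {M : Matrix ι ι ℂ} (hM : M.IsHermitian)
    (f : ℝ → ℝ) {x : ι → ℂ} {μ : ℝ} (hx : M *ᵥ x = (μ : ℂ) • x) :
    cfc f M *ᵥ x = (f μ : ℂ) • x := by
  have hU := hM.eigenvectorUnitary.2
  set U : Matrix ι ι ℂ := (hM.eigenvectorUnitary : Matrix ι ι ℂ)
  have hMU : star U * M = diagonal (fun k => (hM.eigenvalues k : ℂ)) * star U := by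
    conv_lhs => rw [hM.spectral_theorem, Unitary.conjStarAlgAut_apply]
    rw [← Matrix.mul_assoc, ← Matrix.mul_assoc, Unitary.star_mul_self_of_mem hU, Matrix.one_mul]
    rfl
  set y := star U *ᵥ x
  have hy : ∀ k, (hM.eigenvalues k : ℂ) * y k = μ * y k := fun k => by
    have h := congrArg (star U *ᵥ ·) hx
    rw [mulVec_mulVec, hMU, ← mulVec_mulVec, mulVec_smul] at h
    simpa [mulVec_diagonal] using congrFun h k
  have hfy : diagonal (fun k => (f (hM.eigenvalues k) : ℂ)) *ᵥ y = (f μ : ℂ) • y := by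
    funext k
    rw [mulVec_diagonal, Pi.smul_apply, smul_eq_mul]
    rcases eq_or_ne (y k) 0 with h | h
    · simp [h]
    · rw [show hM.eigenvalues k = μ by exact_mod_cast mul_right_cancel₀ h (hy k)]
  rw [hM.cfc_eq, IsHermitian.cfc, Unitary.conjStarAlgAut_apply, ← mulVec_mulVec,
    ← mulVec_mulVec]
  change U *ᵥ (diagonal (fun k => (f (hM.eigenvalues k) : ℂ)) *ᵥ y) = _
  rw [hfy, mulVec_smul, mulVec_mulVec, Unitary.mul_star_self_of_mem hU, one_mulVec]

lemma isHermitian_unitary_mul_diagonal_mul_star (W : Matrix ι ι ℂ) (v : ι → ℝ) :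
    (W * diagonal (fun i => (v i : ℂ)) * star W).IsHermitian :=
  isHermitian_mul_mul_conjTranspose W
    (isHermitian_diagonal_of_self_adjoint _ (funext fun _ => Complex.conj_ofReal _))

lemma cfc_unitary_mul_diagonal_mul_star {W : Matrix ι ι ℂ} (hW : W ∈ unitaryGroup ι ℂ)
    (v : ι → ℝ) (f : ℝ → ℝ) :
    cfc f (W * diagonal (fun i => (v i : ℂ)) * star W) =
      W * diagonal (fun i => (f (v i) : ℂ)) * star W := by
  have hcol (g : ℝ → ℝ) (j : ι) :
      (W * diagonal (fun i => (g (v i) : ℂ)) * star W) *ᵥ (W *ᵥ Pi.single j 1) =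
        (g (v j) : ℂ) • (W *ᵥ Pi.single j 1) := by
    rw [mulVec_mulVec, Matrix.mul_assoc _ (star W), Unitary.star_mul_self_of_mem hW,
      Matrix.mul_one, ← mulVec_mulVec, diagonal_mulVec_single, ← smul_eq_mul, Pi.single_smul',
      mulVec_smul]
  have hW' : cfc f (W * diagonal (fun i => (v i : ℂ)) * star W) * W =
      W * diagonal (fun i => (f (v i) : ℂ)) * star W * W := by
    refine ext_of_mulVec_single fun i => ?_
    rw [← mulVec_mulVec, ← mulVec_mulVec, hcol,
      (isHermitian_unitary_mul_diagonal_mul_star W v).cfc_mulVec_of_mulVec_eq_smul f (hcol id i)]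
    rfl
  simpa [Matrix.mul_assoc, Unitary.mul_star_self_of_mem hW] using congrArg (· * star W) hW'

lemma HasEigenvalues.cfc {M : Matrix ι ι ℂ} {v : ι → ℝ} (h : HasEigenvalues M v) (f : ℝ → ℝ) :
    HasEigenvalues (cfc f M) (fun i => f (v i)) := by
  obtain ⟨W, hW, rfl⟩ := h
  exact ⟨W, hW, cfc_unitary_mul_diagonal_mul_star hW v f⟩

lemma IsHermitian.hasEigenvalues {M : Matrix ι ι ℂ} (hM : M.IsHermitian) :
    HasEigenvalues M hM.eigenvalues :=
  ⟨_, hM.eigenvectorUnitary.2, by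
    conv_lhs => rw [hM.spectral_theorem, Unitary.conjStarAlgAut_apply]
    rfl⟩

lemma HasEigenvalues.comp_perm {M : Matrix ι ι ℂ} {v : ι → ℝ} (h : HasEigenvalues M v)
    (σ : Equiv.Perm ι) : HasEigenvalues M (v ∘ σ) := by
  obtain ⟨W, hW, rfl⟩ := h
  refine ⟨W.submatrix id σ, ?_, ?_⟩
  · rw [mem_unitaryGroup_iff, star_eq_conjTranspose, conjTranspose_submatrix,
      submatrix_mul_equiv, ← star_eq_conjTranspose, Unitary.mul_star_self_of_mem hW,
      submatrix_id_id]
  · rw [star_eq_conjTranspose (W.submatrix _ _), conjTranspose_submatrix, ← star_eq_conjTranspose,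
      show (diagonal fun i => ((v ∘ σ) i : ℂ)) = (diagonal fun i => (v i : ℂ)).submatrix σ σ by
        rw [submatrix_diagonal_equiv]; rfl,
      submatrix_mul_equiv, submatrix_mul_equiv, submatrix_id_id]

lemma submatrix_mem_unitaryGroup {W : Matrix ι ι ℂ} (hW : W ∈ unitaryGroup ι ℂ) (e : ι' ≃ ι) :
    W.submatrix e e ∈ unitaryGroup ι' ℂ := by
  rw [mem_unitaryGroup_iff, star_eq_conjTranspose, conjTranspose_submatrix, submatrix_mul_equiv,
    ← star_eq_conjTranspose, Unitary.mul_star_self_of_mem hW, submatrix_one_equiv]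

lemma submatrix_unitary_mul_diagonal_mul_star (W : Matrix ι ι ℂ) (v : ι → ℝ) (e : ι' ≃ ι) :
    (W * diagonal (fun i => (v i : ℂ)) * star W).submatrix e e =
      W.submatrix e e * diagonal (fun i => (v (e i) : ℂ)) * star (W.submatrix e e) := by
  rw [star_eq_conjTranspose (W.submatrix _ _), conjTranspose_submatrix, ← star_eq_conjTranspose,
    show (diagonal fun i => (v (e i) : ℂ)) = (diagonal fun i => (v i : ℂ)).submatrix e e by
      rw [submatrix_diagonal_equiv]; rfl,
    submatrix_mul_equiv, submatrix_mul_equiv]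

lemma cfc_submatrix {M : Matrix ι ι ℂ} (hM : M.IsHermitian) (e : ι' ≃ ι) (f : ℝ → ℝ) :
    cfc f (M.submatrix e e) = (cfc f M).submatrix e e := by
  obtain ⟨W, hW, hMW⟩ := hM.hasEigenvalues
  rw [hMW, cfc_unitary_mul_diagonal_mul_star hW, submatrix_unitary_mul_diagonal_mul_star,
    submatrix_unitary_mul_diagonal_mul_star, cfc_unitary_mul_diagonal_mul_star
      (submatrix_mem_unitaryGroup hW e)]

lemma IsHermitian.exists_hasEigenvalues_antitone {M : Matrix ι ι ℂ} (hM : M.IsHermitian)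
    {k : ℕ} (κ : ι ≃ Fin k) : ∃ v, HasEigenvalues M v ∧ Antitone (v ∘ κ.symm) := by
  have hk : k = Fintype.card ι := by simpa using (Fintype.card_congr κ).symm
  set e : Fin (Fintype.card ι) ≃ ι := Fintype.equivOfCardEq (Fintype.card_fin _)
  refine ⟨hM.eigenvalues ∘ (κ.trans ((finCongr hk).trans e)), hM.hasEigenvalues.comp_perm _, ?_⟩
  intro a b hab
  simp only [Function.comp_apply, Equiv.trans_apply, Equiv.apply_symm_apply,
    IsHermitian.eigenvalues, e, Equiv.symm_apply_apply]
  exact hM.eigenvalues₀_antitone (by simpa using hab)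

lemma HasEigenvalues.nonneg {M : Matrix ι ι ℂ} {v : ι → ℝ} (h : HasEigenvalues M v)
    (hM : M.PosSemidef) (i : ι) : 0 ≤ v i := by
  obtain ⟨W, hW, rfl⟩ := h
  have hD := hM.conjTranspose_mul_mul_same W
  rw [← star_eq_conjTranspose, ← Matrix.mul_assoc, ← Matrix.mul_assoc,
    Unitary.star_mul_self_of_mem hW, Matrix.one_mul, Matrix.mul_assoc,
    Unitary.star_mul_self_of_mem hW, Matrix.mul_one, posSemidef_diagonal_iff] at hD
  exact_mod_cast hD i

lemma star_dotProduct_diagonal_mulVec_re (v : ι → ℝ) (y : ι → ℂ) :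
    (star y ⬝ᵥ (diagonal (fun i => (v i : ℂ)) *ᵥ y)).re = ∑ i, v i * Complex.normSq (y i) := by
  simp only [dotProduct, mulVec_diagonal, Complex.re_sum, Complex.normSq_apply]
  refine Finset.sum_congr rfl fun i _ => ?_
  simp only [Pi.star_apply, Complex.star_def, Complex.mul_re, Complex.mul_im, Complex.conj_re,
    Complex.conj_im, Complex.ofReal_re, Complex.ofReal_im]
  ring

lemma star_mulVec_dotProduct_mulVec_of_mem_unitaryGroup {W : Matrix ι ι ℂ}
    (hW : W ∈ unitaryGroup ι ℂ) (x y : ι → ℂ) :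
    star (W *ᵥ x) ⬝ᵥ (W *ᵥ y) = star x ⬝ᵥ y := by
  rw [star_mulVec, dotProduct_mulVec, vecMul_vecMul, ← star_eq_conjTranspose,
    Unitary.star_mul_self_of_mem hW, vecMul_one]

lemma unitary_mul_diagonal_mul_star_mulVec {W : Matrix ι ι ℂ} (hW : W ∈ unitaryGroup ι ℂ)
    (v : ι → ℝ) (y : ι → ℂ) :
    (W * diagonal (fun i => (v i : ℂ)) * star W) *ᵥ (W *ᵥ y) =
      W *ᵥ (diagonal (fun i => (v i : ℂ)) *ᵥ y) := by
  rw [mulVec_mulVec, Matrix.mul_assoc _ (star W), Unitary.star_mul_self_of_mem hW, Matrix.mul_one,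
    ← mulVec_mulVec]

/-- Courant–Fischer, upper bound: the `(κ j + 1)`-dimensional image under `G` of the vectors
supported on the top `κ j + 1` positions meets the span of the eigenvectors from position `κ j`
on, where the Rayleigh quotient is at most `v j`. -/
lemma le_of_rayleigh_ge {k : ℕ} {κ : ι ≃ Fin k} {W : Matrix ι ι ℂ} (hW : W ∈ unitaryGroup ι ℂ)
    {v : ι → ℝ} (hv : Antitone (v ∘ κ.symm)) (j : ι) (G : Matrix ι ι ℂ) (t : ℝ)
    (hG : ∀ y : ι → ℂ, (∀ i, κ j < κ i → y i = 0) → G *ᵥ y = 0 → y = 0)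
    (ht : ∀ y : ι → ℂ, (∀ i, κ j < κ i → y i = 0) →
      t * (star (G *ᵥ y) ⬝ᵥ (G *ᵥ y)).re ≤
        (star (G *ᵥ y) ⬝ᵥ ((W * diagonal (fun i => (v i : ℂ)) * star W) *ᵥ (G *ᵥ y))).re) :
    t ≤ v j := by
  let φ : ({i // κ i ≤ κ j} → ℂ) →ₗ[ℂ] ({r // κ r < κ j} → ℂ) :=
    LinearMap.funLeft ℂ ℂ Subtype.val ∘ₗ (star W * G).mulVecLin ∘ₗ
      Function.ExtendByZero.linearMap ℂ Subtype.val
  obtain ⟨c, hc, hc0⟩ := Submodule.exists_mem_ne_zero_of_ne_bot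
    (LinearMap.ker_ne_bot_of_finrank_lt (f := φ) (by
      simp [Module.finrank_fintype_fun_eq_card, card_subtype_lt_apply, card_subtype_le_apply]))
  set y : ι → ℂ := Function.extend Subtype.val c 0
  have hy : ∀ i, κ j < κ i → y i = 0 := fun i hi =>
    Function.extend_apply' _ _ _ (by rintro ⟨a, rfl⟩; exact absurd a.2 (not_le.2 hi))
  have hy0 : y ≠ 0 := fun h => hc0 (funext fun a => by
    simpa [y, Subtype.val_injective.extend_apply] using congrFun h a)
  set z := star W *ᵥ (G *ᵥ y)
  have hz : ∀ r, κ r < κ j → z r = 0 := fun r hr => by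
    rw [show z = (star W * G) *ᵥ y from mulVec_mulVec _ _ _]
    exact congrFun (LinearMap.mem_ker.1 hc) ⟨r, hr⟩
  have hGz : G *ᵥ y = W *ᵥ z := by
    rw [mulVec_mulVec, Unitary.mul_star_self_of_mem hW, one_mulVec]
  have hz0 : 0 < ∑ r, Complex.normSq (z r) :=
    sum_normSq_pos fun h => hy0 (hG y hy (by rw [hGz, h, mulVec_zero]))
  have key := ht y hy
  rw [hGz, unitary_mul_diagonal_mul_star_mulVec hW,
    star_mulVec_dotProduct_mulVec_of_mem_unitaryGroup hW,
    star_mulVec_dotProduct_mulVec_of_mem_unitaryGroup hW, star_dotProduct_self_re,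
    star_dotProduct_diagonal_mulVec_re] at key
  exact le_of_mul_le_mul_right (key.trans (sum_mul_le_mul_sum_of_antitone hv
    (fun _ => Complex.normSq_nonneg _) fun r hr => by simp [hz r hr])) hz0

section Weyl

variable {k : ℕ} {κ : ι ≃ Fin k} {M M' : Matrix ι ι ℂ} {v v' : ι → ℝ}

lemma HasEigenvalues.le_of_posSemidef_sub (hM : HasEigenvalues M v) (hv : Antitone (v ∘ κ.symm))
    (hM' : HasEigenvalues M' v') (hv' : Antitone (v' ∘ κ.symm)) (hle : (M' - M).PosSemidef)
    (j : ι) : v j ≤ v' j := by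
  obtain ⟨W, hW, rfl⟩ := hM
  obtain ⟨W', hW', rfl⟩ := hM'
  -- test `M'` on the span of the top eigenvectors of `M`
  refine le_of_rayleigh_ge hW' hv' j W (v j) (fun y _ hy => ?_) (fun y hy => ?_)
  · rw [← one_mulVec y, ← Unitary.star_mul_self_of_mem hW, ← mulVec_mulVec, hy, mulVec_zero]
  · refine le_trans ?_ (re_dotProduct_mulVec_le_of_posSemidef_sub hle _)
    rw [unitary_mul_diagonal_mul_star_mulVec hW,
      star_mulVec_dotProduct_mulVec_of_mem_unitaryGroup hW,
      star_mulVec_dotProduct_mulVec_of_mem_unitaryGroup hW, star_dotProduct_self_re,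
      star_dotProduct_diagonal_mulVec_re]
    exact mul_sum_le_sum_mul_of_antitone hv (fun _ => Complex.normSq_nonneg _)
      fun i hi => by simp [hy i hi]

lemma HasEigenvalues.le_of_conjTranspose_mul_self (R : Matrix ι ι ℂ)
    (hM : HasEigenvalues (Rᴴ * R) v) (hv : Antitone (v ∘ κ.symm))
    (hM' : HasEigenvalues (R * Rᴴ) v') (hv' : Antitone (v' ∘ κ.symm)) (j : ι) : v j ≤ v' j := by
  rcases le_or_gt (v j) 0 with hj | hj
  · exact hj.trans (hM'.nonneg (posSemidef_self_mul_conjTranspose R) j)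
  obtain ⟨W, hW, hRR⟩ := hM
  obtain ⟨W', hW', hRR'⟩ := hM'
  have hnorm (y : ι → ℂ) :
      (star ((R * W) *ᵥ y) ⬝ᵥ ((R * W) *ᵥ y)).re = ∑ i, v i * Complex.normSq (y i) := by
    rw [← mulVec_mulVec, star_mulVec_dotProduct_mulVec, hRR,
      unitary_mul_diagonal_mul_star_mulVec hW, star_mulVec_dotProduct_mulVec_of_mem_unitaryGroup hW,
      star_dotProduct_diagonal_mulVec_re]
  have hsupp {y : ι → ℂ} (hy : ∀ i, κ j < κ i → y i = 0) (i : ι) :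
      0 ≤ v i * Complex.normSq (y i) := by
    rcases lt_or_ge (κ j) (κ i) with h | h
    · simp [hy i h]
    · exact mul_nonneg (hj.le.trans (by simpa using hv h)) (Complex.normSq_nonneg _)
  have hD : (diagonal fun i => (v i : ℂ))ᴴ * diagonal (fun i => (v i : ℂ)) =
      diagonal fun i => ((v i * v i : ℝ) : ℂ) := by
    rw [diagonal_conjTranspose, diagonal_mul_diagonal]
    congr 1
    funext i
    simp
  -- test `RRᴴ` on the image under `R` of the top eigenvectors of `RᴴR`
  refine le_of_rayleigh_ge hW' hv' j (R * W) (v j) (fun y hy hRWy => ?_) (fun y hy => ?_)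
  · by_contra hy0
    have h := mul_sum_le_sum_mul_of_antitone hv (fun _ => Complex.normSq_nonneg _)
      (j := j) (w := fun i => Complex.normSq (y i)) fun i hi => by simp [hy i hi]
    rw [← hnorm, hRWy] at h
    nlinarith [sum_normSq_pos hy0, show (star (0 : ι → ℂ) ⬝ᵥ 0).re = 0 by simp]
  · have hRRx := star_mulVec_dotProduct_mulVec Rᴴ ((R * W) *ᵥ y)
    rw [conjTranspose_conjTranspose] at hRRx
    have hRW : Rᴴ *ᵥ ((R * W) *ᵥ y) = W *ᵥ (diagonal (fun i => (v i : ℂ)) *ᵥ y) := by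
      rw [← unitary_mul_diagonal_mul_star_mulVec hW, ← hRR, mulVec_mulVec, mulVec_mulVec,
        Matrix.mul_assoc]
    rw [← hRR', ← hRRx, hRW, star_mulVec_dotProduct_mulVec_of_mem_unitaryGroup hW,
      star_mulVec_dotProduct_mulVec (diagonal _) y, hD, star_dotProduct_diagonal_mulVec_re, hnorm]
    simpa only [mul_assoc] using mul_sum_le_sum_mul_of_antitone hv (hsupp hy)
      fun i hi => by simp [hy i hi]

end Weyl

structure IsUnitarilyInvariantSeminorm (N : Matrix ι ι ℂ → ℝ) : Prop where
  add_le : ∀ M₁ M₂, N (M₁ + M₂) ≤ N M₁ + N M₂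
  smul_eq : ∀ (c : ℂ) M, N (c • M) = ‖c‖ * N M
  unitary_mul_mul : ∀ U V, U ∈ unitaryGroup ι ℂ → V ∈ unitaryGroup ι ℂ → ∀ M, N (U * M * V) = N M

namespace IsUnitarilyInvariantSeminorm

variable {N : Matrix ι ι ℂ → ℝ} (hN : IsUnitarilyInvariantSeminorm N)
include hN

lemma unitary_mul (U M : Matrix ι ι ℂ) (hU : U ∈ unitaryGroup ι ℂ) : N (U * M) = N M := by
  simpa using hN.unitary_mul_mul U 1 hU (one_mem _) M

lemma diagonal_le {v v' : ι → ℝ} (h0 : ∀ i, 0 ≤ v i) (hle : ∀ i, v i ≤ v' i) :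
    N (diagonal fun i => (v i : ℂ)) ≤ N (diagonal fun i => (v' i : ℂ)) := by
  choose u hu hre using fun i => Complex.exists_norm_eq_one_re_mul_eq (h0 i) (hle i)
  have hU : diagonal u ∈ unitaryGroup ι ℂ := by
    rw [mem_unitaryGroup_iff, star_eq_conjTranspose, diagonal_conjTranspose, diagonal_mul_diagonal]
    convert diagonal_one with i
    rw [Pi.star_apply, Complex.star_def, Complex.mul_conj, Complex.normSq_eq_norm_sq, hu]
    simp
  set D' : Matrix ι ι ℂ := diagonal fun i => (v' i : ℂ)
  have hsplit : (diagonal fun i => (v i : ℂ)) =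
      (1 / 2 : ℂ) • (diagonal u * D') + (1 / 2 : ℂ) • (star (diagonal u) * D') := by
    rw [star_eq_conjTranspose, diagonal_conjTranspose, diagonal_mul_diagonal, diagonal_mul_diagonal,
      ← diagonal_smul, ← diagonal_smul, diagonal_add]
    congr 1
    funext i
    apply Complex.ext
    · simp [← hre i]
      ring
    · simp
  calc N (diagonal fun i => (v i : ℂ))
      ≤ N ((1 / 2 : ℂ) • (diagonal u * D')) + N ((1 / 2 : ℂ) • (star (diagonal u) * D')) := by
        rw [hsplit]; exact hN.add_le _ _
    _ = N D' := by
        rw [hN.smul_eq, hN.smul_eq, hN.unitary_mul _ _ hU,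
          hN.unitary_mul _ _ (Unitary.star_mem hU)]
        norm_num
        ring

lemma le_of_hasEigenvalues {M M' : Matrix ι ι ℂ} {v v' : ι → ℝ} (hM : HasEigenvalues M v)
    (hM' : HasEigenvalues M' v') (h0 : ∀ i, 0 ≤ v i) (hle : ∀ i, v i ≤ v' i) : N M ≤ N M' := by
  obtain ⟨W, hW, rfl⟩ := hM
  obtain ⟨W', hW', rfl⟩ := hM'
  rw [hN.unitary_mul_mul _ _ hW (Unitary.star_mem hW),
    hN.unitary_mul_mul _ _ hW' (Unitary.star_mem hW')]
  exact hN.diagonal_le h0 hle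

lemma submatrix (e : ι' ≃ ι) :
    IsUnitarilyInvariantSeminorm fun M : Matrix ι' ι' ℂ => N (M.submatrix e.symm e.symm) where
  add_le M₁ M₂ := by simpa [submatrix_add] using hN.add_le _ _
  smul_eq c M := by simpa [submatrix_smul] using hN.smul_eq c _
  unitary_mul_mul U V hU hV M := by
    rw [← submatrix_mul_equiv _ _ _ e.symm, ← submatrix_mul_equiv _ _ _ e.symm,
      hN.unitary_mul_mul _ _ (submatrix_mem_unitaryGroup hU e.symm)
        (submatrix_mem_unitaryGroup hV e.symm)]

end IsUnitarilyInvariantSeminorm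

section Blocks

variable {ι₁ ι₂ : Type*} [Fintype ι₁] [DecidableEq ι₁] [Fintype ι₂] [DecidableEq ι₂]

lemma hasEigenvalues_zero : HasEigenvalues (0 : Matrix ι ι ℂ) 0 :=
  ⟨1, one_mem _, by simp⟩

lemma HasEigenvalues.fromBlocks {X : Matrix ι₁ ι₁ ℂ} {Y : Matrix ι₂ ι₂ ℂ} {v₁ : ι₁ → ℝ}
    {v₂ : ι₂ → ℝ} (hX : HasEigenvalues X v₁) (hY : HasEigenvalues Y v₂) :
    HasEigenvalues (Matrix.fromBlocks X 0 0 Y) (Sum.elim v₁ v₂) := by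
  obtain ⟨W₁, hW₁, rfl⟩ := hX
  obtain ⟨W₂, hW₂, rfl⟩ := hY
  refine ⟨Matrix.fromBlocks W₁ 0 0 W₂, ?_, ?_⟩
  · rw [mem_unitaryGroup_iff, star_eq_conjTranspose, fromBlocks_conjTranspose,
      fromBlocks_multiply, ← star_eq_conjTranspose, ← star_eq_conjTranspose,
      Unitary.mul_star_self_of_mem hW₁, Unitary.mul_star_self_of_mem hW₂]
    simp [fromBlocks_one]
  · have hD : (diagonal fun i => ((Sum.elim v₁ v₂ i : ℝ) : ℂ)) =
        Matrix.fromBlocks (diagonal fun i => (v₁ i : ℂ)) 0 0 (diagonal fun i => (v₂ i : ℂ)) := by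
      rw [fromBlocks_diagonal]
      congr 1
      funext i
      cases i <;> rfl
    rw [hD, star_eq_conjTranspose (Matrix.fromBlocks _ _ _ _), fromBlocks_conjTranspose,
      fromBlocks_multiply, fromBlocks_multiply]
    simp [star_eq_conjTranspose]

lemma fromBlocks_one_zero_mul_mul (M : Matrix (ι₁ ⊕ ι₂) (ι₁ ⊕ ι₂) ℂ) :
    fromBlocks 1 0 0 0 * M * fromBlocks 1 0 0 0 = fromBlocks M.toBlocks₁₁ 0 0 0 := by
  conv_lhs => rw [← fromBlocks_toBlocks M]
  simp [fromBlocks_multiply]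

end Blocks

section Compression

open scoped MatrixOrder

lemma spectrum_subset_Ici_of_posSemidef {H : Matrix ι ι ℂ} (hH : H.PosSemidef) :
    spectrum ℝ H ⊆ Set.Ici 0 :=
  fun _ hx => spectrum_nonneg_of_nonneg (nonneg_iff_posSemidef.2 hH) hx

lemma cfc_const_add_mul_id {M : Matrix ι ι ℂ} (hM : M.IsHermitian) (α s : ℝ) :
    cfc (fun x => α + s * x) M = α • 1 + s • M := by
  rw [cfc_const_add α _ M (finite_real_spectrum.continuousOn _) hM.isSelfAdjoint,
    cfc_const_mul_id s M hM.isSelfAdjoint, Algebra.algebraMap_eq_smul_one]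

lemma eigenvalues_submatrix_cfc_le {H : Matrix ι ι ℂ} (hH : H.PosSemidef) {f : ℝ → ℝ}
    (hf : ConcaveOn ℝ (Set.Ici 0) f) (hf0 : ∀ x, 0 ≤ x → 0 ≤ f x) {e : ι' → ι}
    (he : Function.Injective e) {k : ℕ} {κ : ι' ≃ Fin k} {a c : ι' → ℝ}
    (ha : HasEigenvalues (H.submatrix e e) a) (ha' : Antitone (a ∘ κ.symm))
    (hc : HasEigenvalues ((cfc f H).submatrix e e) c) (hc' : Antitone (c ∘ κ.symm)) (i : ι') :
    c i ≤ f (a i) := by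
  obtain ⟨s, hs0, hsup⟩ := hf.exists_supergradient_of_finite hf0 finite_real_spectrum
    (spectrum_subset_Ici_of_posSemidef hH) (ha.nonneg (hH.submatrix e) i)
  set α := f (a i) - s * a i
  have hle : cfc f H ≤ cfc (fun x => α + s * x) H :=
    cfc_mono (fun x hx => by linarith [hsup x hx]) (finite_real_spectrum.continuousOn _)
      (finite_real_spectrum.continuousOn _)
  have hcomp :
      (cfc (fun x => α + s * x) (H.submatrix e e) - (cfc f H).submatrix e e).PosSemidef := by
    rw [cfc_const_add_mul_id (hH.submatrix e).1]
    rw [cfc_const_add_mul_id hH.1] at hle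
    simpa [submatrix_sub, submatrix_add, submatrix_smul, submatrix_one e he] using
      (le_iff.1 hle).submatrix e
  have hanti : Antitone ((fun j => α + s * a j) ∘ κ.symm) := fun x y hxy => by
    simpa using mul_le_mul_of_nonneg_left (ha' hxy) hs0
  simpa [α] using hc.le_of_posSemidef_sub hc' (ha.cfc _) hanti hcomp i

lemma cfc_sqrt_mul_self {H : Matrix ι ι ℂ} (hH : H.PosSemidef) {f : ℝ → ℝ}
    (hf0 : ∀ x, 0 ≤ x → 0 ≤ f x) :
    cfc (fun x => √(f x)) H * cfc (fun x => √(f x)) H = cfc f H := by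
  rw [← cfc_mul _ _ H (finite_real_spectrum.continuousOn _) (finite_real_spectrum.continuousOn _)]
  exact cfc_congr fun x hx =>
    Real.mul_self_sqrt (hf0 x (spectrum_subset_Ici_of_posSemidef hH hx))

lemma posSemidef_cfc {H : Matrix ι ι ℂ} (hH : H.PosSemidef) {f : ℝ → ℝ}
    (hf0 : ∀ x, 0 ≤ x → 0 ≤ f x) : (cfc f H).PosSemidef :=
  nonneg_iff_posSemidef.1 (cfc_nonneg fun x hx => hf0 x (spectrum_subset_Ici_of_posSemidef hH hx))

end Compression

section Corners

variable {ι₁ ι₂ : Type*} [Fintype ι₁] [DecidableEq ι₁] [Fintype ι₂] [DecidableEq ι₂]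
  {N : Matrix (ι₁ ⊕ ι₂) (ι₁ ⊕ ι₂) ℂ → ℝ} {H : Matrix (ι₁ ⊕ ι₂) (ι₁ ⊕ ι₂) ℂ} {f : ℝ → ℝ}

lemma IsUnitarilyInvariantSeminorm.apply_sqrt_mul_proj₁₁_mul_sqrt_le
    (hN : IsUnitarilyInvariantSeminorm N) (hH : H.PosSemidef) (hf : ConcaveOn ℝ (Set.Ici 0) f)
    (hf0 : ∀ x, 0 ≤ x → 0 ≤ f x) :
    N (cfc (fun x => √(f x)) H * fromBlocks 1 0 0 0 * cfc (fun x => √(f x)) H) ≤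
      N (fromBlocks (cfc f H.toBlocks₁₁) 0 0 0) := by
  set g := cfc (fun x => √(f x)) H
  set P : Matrix (ι₁ ⊕ ι₂) (ι₁ ⊕ ι₂) ℂ := fromBlocks 1 0 0 0
  set κ := ((Fintype.equivFin ι₁).sumCongr (Fintype.equivFin ι₂)).trans finSumFinEquiv
  have hg : gᴴ = g := cfc_predicate (p := IsSelfAdjoint) _ H
  have hPH : Pᴴ = P := by simp [P, fromBlocks_conjTranspose]
  have hA := hH.submatrix (Sum.inl : ι₁ → ι₁ ⊕ ι₂)
  have hC := (posSemidef_cfc hH hf0).submatrix (Sum.inl : ι₁ → ι₁ ⊕ ι₂)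
  obtain ⟨a, ha, ha'⟩ := hA.1.exists_hasEigenvalues_antitone (Fintype.equivFin ι₁)
  obtain ⟨c, hc, hc'⟩ := hC.1.exists_hasEigenvalues_antitone (Fintype.equivFin ι₁)
  have hca := eigenvalues_submatrix_cfc_le hH hf hf0 Sum.inl_injective ha ha' hc hc'
  have hPP : P * P = P := by simp [P, fromBlocks_multiply]
  have hS : (P * g)ᴴ * (P * g) = g * P * g := by
    rw [conjTranspose_mul, hg, hPH, Matrix.mul_assoc, ← Matrix.mul_assoc P, hPP, Matrix.mul_assoc]
  have hS' : (P * g) * (P * g)ᴴ = fromBlocks (cfc f H).toBlocks₁₁ 0 0 0 := by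
    rw [conjTranspose_mul, hg, hPH, Matrix.mul_assoc, ← Matrix.mul_assoc g,
      cfc_sqrt_mul_self hH hf0, ← Matrix.mul_assoc, fromBlocks_one_zero_mul_mul]
  obtain ⟨σ, hσ, hσ'⟩ :=
    (isHermitian_conjTranspose_mul_self (P * g)).exists_hasEigenvalues_antitone κ
  have hσc := HasEigenvalues.le_of_conjTranspose_mul_self (P * g) hσ hσ'
    (hS' ▸ hc.fromBlocks hasEigenvalues_zero) (antitone_sumElim_zero hc' (hc.nonneg hC))
  rw [← hS]
  refine hN.le_of_hasEigenvalues hσ ((ha.cfc f).fromBlocks hasEigenvalues_zero)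
    (hσ.nonneg (posSemidef_conjTranspose_mul_self _)) fun i => (hσc i).trans ?_
  rcases i with i | i
  · exact hca i
  · exact le_rfl

lemma IsUnitarilyInvariantSeminorm.apply_sqrt_mul_proj₂₂_mul_sqrt_le
    (hN : IsUnitarilyInvariantSeminorm N) (hH : H.PosSemidef) (hf : ConcaveOn ℝ (Set.Ici 0) f)
    (hf0 : ∀ x, 0 ≤ x → 0 ≤ f x) :
    N (cfc (fun x => √(f x)) H * fromBlocks 0 0 0 1 * cfc (fun x => √(f x)) H) ≤
      N (fromBlocks 0 0 0 (cfc f H.toBlocks₂₂)) := by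
  set e := Equiv.sumComm ι₂ ι₁
  have hP : (fromBlocks 1 0 0 0 : Matrix (ι₂ ⊕ ι₁) (ι₂ ⊕ ι₁) ℂ) =
      (fromBlocks 0 0 0 1).submatrix e e :=
    (fromBlocks_submatrix_sum_swap_sum_swap _ _ _ _).symm
  have hB : (H.submatrix e e).toBlocks₁₁ = H.toBlocks₂₂ := rfl
  have h := (hN.submatrix e).apply_sqrt_mul_proj₁₁_mul_sqrt_le (hH.submatrix e) hf hf0
  rw [cfc_submatrix hH.1 e, hP, submatrix_mul_equiv, submatrix_mul_equiv, hB] at h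
  simpa [e, submatrix_submatrix, fromBlocks_submatrix_sum_swap_sum_swap] using h

end Corners

end Matrix

theorem norm_concave_block_general {n m : ℕ}
    {A : Matrix (Fin n) (Fin n) ℂ} {B : Matrix (Fin m) (Fin m) ℂ}
    {X : Matrix (Fin n) (Fin m) ℂ}
    (hH : (Matrix.fromBlocks A X Xᴴ B).PosSemidef)
    (f : ℝ → ℝ) (hconc : ConcaveOn ℝ (Set.Ici (0 : ℝ)) f)
    (hf0 : ∀ x : ℝ, 0 ≤ x → 0 ≤ f x)
    (N : Matrix (Fin n ⊕ Fin m) (Fin n ⊕ Fin m) ℂ → ℝ)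
    (hNadd : ∀ M₁ M₂, N (M₁ + M₂) ≤ N M₁ + N M₂)
    (hNsmul : ∀ (c : ℂ) M, N (c • M) = ‖c‖ * N M)
    (hNinv : ∀ U V : Matrix (Fin n ⊕ Fin m) (Fin n ⊕ Fin m) ℂ,
      U ∈ Matrix.unitaryGroup (Fin n ⊕ Fin m) ℂ →
      V ∈ Matrix.unitaryGroup (Fin n ⊕ Fin m) ℂ → ∀ M, N (U * M * V) = N M) :
    N (cfc f (Matrix.fromBlocks A X Xᴴ B)) ≤
      N (Matrix.fromBlocks (cfc f A) 0 0 0) + N (Matrix.fromBlocks 0 0 0 (cfc f B)) := by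
  have hN : IsUnitarilyInvariantSeminorm N := ⟨hNadd, hNsmul, hNinv⟩
  set H := Matrix.fromBlocks A X Xᴴ B
  set g := cfc (fun x => √(f x)) H
  have hsplit : cfc f H = g * fromBlocks 1 0 0 0 * g + g * fromBlocks 0 0 0 1 * g := by
    rw [← add_mul, ← mul_add, fromBlocks_add]
    simp only [add_zero, zero_add]
    rw [fromBlocks_one, mul_one, cfc_sqrt_mul_self hH hf0]
  calc N (cfc f H)
      ≤ N (g * fromBlocks 1 0 0 0 * g) + N (g * fromBlocks 0 0 0 1 * g) := by
        rw [hsplit]; exact hNadd _ _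
    _ ≤ _ := add_le_add
        (by simpa [H] using hN.apply_sqrt_mul_proj₁₁_mul_sqrt_le hH hconc hf0)
        (by simpa [H] using hN.apply_sqrt_mul_proj₂₂_mul_sqrt_le hH hconc hf0)

/-- **Norm inequality for concave functions of positive block matrices
(Bourin–Lee).** For a nonnegative concave `f` on `[0,∞)`, a positive
semidefinite `H = [[A, X],[X*, B]]` and any unitarily invariant norm `N`
(blocks viewed inside the big space via padding with zeros),
`N(f(H)) ≤ N(f(A)) + N(f(B))`. -/
theorem norm_concave_block {n m : ℕ}
    {A : Matrix (Fin n) (Fin n) ℂ} {B : Matrix (Fin m) (Fin m) ℂ}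
    {X : Matrix (Fin n) (Fin m) ℂ}
    (hH : (Matrix.fromBlocks A X Xᴴ B).PosSemidef)
    (f : ℝ → ℝ) (hconc : ConcaveOn ℝ (Set.Ici (0 : ℝ)) f)
    (hf0 : ∀ x : ℝ, 0 ≤ x → 0 ≤ f x)
    (N : Matrix (Fin n ⊕ Fin m) (Fin n ⊕ Fin m) ℂ → ℝ)
    (hN0 : ∀ M, 0 ≤ N M)
    (hNadd : ∀ M₁ M₂, N (M₁ + M₂) ≤ N M₁ + N M₂)
    (hNsmul : ∀ (c : ℂ) M, N (c • M) = ‖c‖ * N M)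
    (hNinv : ∀ U V : Matrix (Fin n ⊕ Fin m) (Fin n ⊕ Fin m) ℂ,
      U ∈ Matrix.unitaryGroup (Fin n ⊕ Fin m) ℂ →
      V ∈ Matrix.unitaryGroup (Fin n ⊕ Fin m) ℂ → ∀ M, N (U * M * V) = N M) :
    N (cfc f (Matrix.fromBlocks A X Xᴴ B)) ≤
      N (Matrix.fromBlocks (cfc f A) 0 0 0) + N (Matrix.fromBlocks 0 0 0 (cfc f B)) :=
  norm_concave_block_general hH f hconc hf0 N hNadd hNsmul hNinv
end

section
/- For every positive semidefinite block matrix H = [[A, X],[X*, B]] with blocks in M_n(ℂ) and every concave function f on [0,∞), one has Tr f(H) ≤ Tr f(A) + Tr f(B). In particular (with f = log), the Fischer inequality det H ≤ det A · det B holds. -/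
open Matrix ComplexOrder Filter Topology

/-!
Conjugating `H = [[A, X], [X*, B]]` by the block-diagonal unitary `diag(P, Q)` that diagonalizes
`A` and `B` does not change the spectrum of `H` and turns its diagonal into the eigenvalues of `A`
followed by those of `B`. For any Hermitian `M = U D U*` the diagonal is `S λ(M)` with
`S = (|U i j|²)` doubly stochastic, so Jensen's inequality row by row gives
`∑ f(λ(M)) ≤ ∑ f(M i i)` for concave `f`. Fischer's inequality is the case `f = log (· + ε)`
(shifted because `log` is singular at `0`), exponentiated and sent to the limit `ε → 0⁺`.
-/

theorem ConcaveOn.sum_le_sum_map_mulVec {n : Type*} [Fintype n] [DecidableEq n] {s : Set ℝ}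
    {f : ℝ → ℝ} (hf : ConcaveOn ℝ s f) {S : Matrix n n ℝ} (hS : S ∈ doublyStochastic ℝ n)
    {x : n → ℝ} (hx : ∀ j, x j ∈ s) :
    ∑ j, f (x j) ≤ ∑ i, f ((S *ᵥ x) i) :=
  calc ∑ j, f (x j) = ∑ i, ∑ j, S i j * f (x j) := by
        rw [Finset.sum_comm]
        simp_rw [← Finset.sum_mul, sum_col_of_mem_doublyStochastic hS, one_mul]
    _ ≤ ∑ i, f ((S *ᵥ x) i) := Finset.sum_le_sum fun i _ =>
        hf.le_map_sum (fun j _ => nonneg_of_mem_doublyStochastic hS)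
          (sum_row_of_mem_doublyStochastic hS i) (fun j _ => hx j)

theorem Real.concaveOn_log_add {ε : ℝ} (hε : 0 < ε) :
    ConcaveOn ℝ (Set.Ici 0) fun x => Real.log (x + ε) :=
  (strictConcaveOn_log_Ioi.concaveOn.translate_left ε).subset
    (fun x (hx : 0 ≤ x) => show 0 < ε + x by positivity) (convex_Ici 0)

theorem tendsto_prod_add_nhdsGT_zero {ι : Type*} [Fintype ι] (d : ι → ℝ) :
    Tendsto (fun ε => ∏ i, (d i + ε)) (𝓝[>] 0) (𝓝 (∏ i, d i)) := by
  have hcont : Continuous fun ε => ∏ i, (d i + ε) := by fun_prop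
  simpa using (hcont.tendsto 0).mono_left nhdsWithin_le_nhds

theorem prod_le_prod_of_forall_sum_log_add_le {ι κ : Type*} [Fintype ι] [Fintype κ]
    {c : ι → ℝ} {a : κ → ℝ} (hc : ∀ i, 0 ≤ c i) (ha : ∀ k, 0 ≤ a k)
    (h : ∀ ε > 0, ∑ i, Real.log (c i + ε) ≤ ∑ k, Real.log (a k + ε)) :
    ∏ i, c i ≤ ∏ k, a k := by
  have hshift : ∀ ε > 0, ∏ i, (c i + ε) ≤ ∏ k, (a k + ε) := fun ε hε => by
    have hc' : ∀ i, 0 < c i + ε := fun i => by linarith [hc i]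
    have ha' : ∀ k, 0 < a k + ε := fun k => by linarith [ha k]
    rw [← Real.log_le_log_iff (Finset.prod_pos fun i _ => hc' i)
      (Finset.prod_pos fun k _ => ha' k), Real.log_prod fun i _ => (hc' i).ne',
      Real.log_prod fun k _ => (ha' k).ne']
    exact h ε hε
  exact le_of_tendsto_of_tendsto (tendsto_prod_add_nhdsGT_zero c) (tendsto_prod_add_nhdsGT_zero a)
    (eventually_nhdsWithin_of_forall hshift)

namespace Matrix

section BlockDiagonal

variable {m n α : Type*} [Semiring α] [StarRing α]

theorem star_fromBlocks_zero (P : Matrix m m α) (Q : Matrix n n α) :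
    star (fromBlocks P 0 0 Q) = fromBlocks (star P) 0 0 (star Q) := by
  simp [star_eq_conjTranspose, fromBlocks_conjTranspose]

theorem fromBlocks_zero_mem_unitary [Fintype m] [Fintype n] [DecidableEq m] [DecidableEq n]
    {P : Matrix m m α} {Q : Matrix n n α} (hP : P ∈ unitary (Matrix m m α))
    (hQ : Q ∈ unitary (Matrix n n α)) :
    fromBlocks P 0 0 Q ∈ unitary (Matrix (m ⊕ n) (m ⊕ n) α) := by
  simp [Unitary.mem_iff, star_fromBlocks_zero, fromBlocks_multiply,
    Unitary.star_mul_self_of_mem hP, Unitary.star_mul_self_of_mem hQ,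
    Unitary.mul_star_self_of_mem hP, Unitary.mul_star_self_of_mem hQ]

theorem star_fromBlocks_zero_mul_mul [Fintype m] [Fintype n] (P : Matrix m m α) (Q : Matrix n n α)
    (A : Matrix m m α) (X : Matrix m n α) (Y : Matrix n m α) (B : Matrix n n α) :
    star (fromBlocks P 0 0 Q) * fromBlocks A X Y B * fromBlocks P 0 0 Q =
      fromBlocks (star P * A * P) (star P * X * Q) (star Q * Y * P) (star Q * B * Q) := by
  simp [star_fromBlocks_zero, fromBlocks_multiply, Matrix.mul_assoc]

end BlockDiagonal

variable {𝕜 : Type*} [RCLike 𝕜] {m n : Type*} [Fintype m] [Fintype n] [DecidableEq n]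

theorem norm_sq_mem_doublyStochastic {U : Matrix n n 𝕜} (hU : U ∈ unitary (Matrix n n 𝕜)) :
    of (fun i j => ‖U i j‖ ^ 2) ∈ doublyStochastic ℝ n := by
  refine mem_doublyStochastic_iff_sum.2
    ⟨fun _ _ => by simp only [of_apply]; positivity, fun i => ?_, fun j => ?_⟩
  · have hrow := congr($(Unitary.mul_star_self_of_mem hU) i i)
    simp only [mul_apply, star_apply, RCLike.star_def, RCLike.mul_conj, one_apply_eq] at hrow
    exact_mod_cast hrow
  · have hcol := congr($(Unitary.star_mul_self_of_mem hU) j j)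
    simp only [mul_apply, star_apply, RCLike.star_def, RCLike.conj_mul, one_apply_eq] at hcol
    exact_mod_cast hcol

theorem re_mul_diagonal_mul_star_apply_self (U : Matrix n n 𝕜) (d : n → ℝ) (i : n) :
    RCLike.re ((U * diagonal (RCLike.ofReal ∘ d) * star U : Matrix n n 𝕜) i i) =
      (of (fun i j => ‖U i j‖ ^ 2) *ᵥ d) i := by
  rw [mul_apply, map_sum]
  refine Finset.sum_congr rfl fun j _ => ?_
  rw [mul_diagonal, star_apply, RCLike.star_def, Function.comp_apply, mul_right_comm,
    RCLike.mul_conj]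
  dsimp only [of_apply]
  norm_cast

namespace IsHermitian

theorem trace_cfc {M : Matrix n n 𝕜} (hM : M.IsHermitian) (f : ℝ → ℝ) :
    (cfc f M).trace = ∑ i, (f (hM.eigenvalues i) : 𝕜) := by
  rw [hM.cfc_eq, IsHermitian.cfc, Unitary.conjStarAlgAut_apply, trace_mul_cycle,
    Unitary.coe_star_mul_self, Matrix.one_mul, trace_diagonal]
  rfl

theorem eigenvalues_star_mul_mul_of_mem_unitary {M : Matrix n n 𝕜} (hM : M.IsHermitian)
    {U : Matrix n n 𝕜} (hU : U ∈ unitary (Matrix n n 𝕜)) (hM' : (star U * M * U).IsHermitian) :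
    hM'.eigenvalues = hM.eigenvalues := by
  rw [hM'.eigenvalues_eq_eigenvalues_iff hM, Matrix.mul_assoc, charpoly_mul_comm,
    Matrix.mul_assoc, Unitary.mul_star_self_of_mem hU, Matrix.mul_one]

theorem re_diag_eq_mulVec_eigenvalues {M : Matrix n n 𝕜} (hM : M.IsHermitian) (i : n) :
    RCLike.re (M i i) =
      (of (fun i j => ‖(hM.eigenvectorUnitary : Matrix n n 𝕜) i j‖ ^ 2) *ᵥ hM.eigenvalues) i := by
  conv_lhs => rw [hM.spectral_theorem, Unitary.conjStarAlgAut_apply]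
  exact re_mul_diagonal_mul_star_apply_self _ _ i

theorem sum_map_eigenvalues_le_sum_map_diag {M : Matrix n n 𝕜} (hM : M.IsHermitian)
    {s : Set ℝ} {f : ℝ → ℝ} (hf : ConcaveOn ℝ s f) (hs : ∀ i, hM.eigenvalues i ∈ s) :
    ∑ i, f (hM.eigenvalues i) ≤ ∑ i, f (RCLike.re (M i i)) := by
  simp_rw [hM.re_diag_eq_mulVec_eigenvalues]
  exact hf.sum_le_sum_map_mulVec (norm_sq_mem_doublyStochastic (SetLike.coe_mem _)) hs

theorem re_star_eigenvectorUnitary_mul_mul_apply_self {M : Matrix n n 𝕜} (hM : M.IsHermitian)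
    (i : n) :
    RCLike.re ((star (hM.eigenvectorUnitary : Matrix n n 𝕜) * M * hM.eigenvectorUnitary) i i) =
      hM.eigenvalues i := by
  simpa using congr(RCLike.re ($(hM.conjStarAlgAut_star_eigenvectorUnitary) i i))

theorem sum_map_eigenvalues_fromBlocks_le [DecidableEq m] {A : Matrix m m 𝕜} {B : Matrix n n 𝕜}
    {X : Matrix m n 𝕜} (hH : (Matrix.fromBlocks A X Xᴴ B).IsHermitian) (hA : A.IsHermitian)
    (hB : B.IsHermitian) {s : Set ℝ} {f : ℝ → ℝ} (hf : ConcaveOn ℝ s f)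
    (hs : ∀ i, hH.eigenvalues i ∈ s) :
    ∑ i, f (hH.eigenvalues i) ≤ ∑ i, f (hA.eigenvalues i) + ∑ i, f (hB.eigenvalues i) := by
  set V := Matrix.fromBlocks (hA.eigenvectorUnitary : Matrix m m 𝕜) 0 0
    (hB.eigenvectorUnitary : Matrix n n 𝕜)
  have hV : V ∈ unitary _ := fromBlocks_zero_mem_unitary (SetLike.coe_mem _) (SetLike.coe_mem _)
  have hH' : (star V * Matrix.fromBlocks A X Xᴴ B * V).IsHermitian :=
    isHermitian_conjTranspose_mul_mul V hH
  have hspec := hH.eigenvalues_star_mul_mul_of_mem_unitary hV hH'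
  rw [← hspec] at hs ⊢
  refine (hH'.sum_map_eigenvalues_le_sum_map_diag hf hs).trans_eq ?_
  simp [V, star_fromBlocks_zero_mul_mul, Fintype.sum_sum_type,
    re_star_eigenvectorUnitary_mul_mul_apply_self]

end IsHermitian

end Matrix

/-- **Rotfel'd-type trace inequality for block matrices, and Fischer's
inequality.** For a positive semidefinite `H = [[A, X],[X*, B]]` with blocks in
`M_n` and any concave `f` on `[0,∞)`, `Tr f(H) ≤ Tr f(A) + Tr f(B)`; moreover
`det H ≤ det A · det B`. -/
theorem trace_concave_block_and_fischer {n : ℕ}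
    {A B : Matrix (Fin n) (Fin n) ℂ} {X : Matrix (Fin n) (Fin n) ℂ}
    (hH : (Matrix.fromBlocks A X Xᴴ B).PosSemidef)
    (f : ℝ → ℝ) (hconc : ConcaveOn ℝ (Set.Ici (0 : ℝ)) f) :
    (cfc f (Matrix.fromBlocks A X Xᴴ B)).trace ≤ (cfc f A).trace + (cfc f B).trace ∧
    (Matrix.fromBlocks A X Xᴴ B).det ≤ A.det * B.det := by
  have hA : A.PosSemidef := hH.submatrix Sum.inl
  have hB : B.PosSemidef := hH.submatrix Sum.inr
  have key {g : ℝ → ℝ} (hg : ConcaveOn ℝ (Set.Ici 0) g) :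
      ∑ i, g (hH.1.eigenvalues i) ≤ ∑ i, g (hA.1.eigenvalues i) + ∑ i, g (hB.1.eigenvalues i) :=
    hH.isHermitian.sum_map_eigenvalues_fromBlocks_le hA.1 hB.1 hg hH.eigenvalues_nonneg
  refine ⟨?_, ?_⟩
  · rw [hH.1.trace_cfc, hA.1.trace_cfc, hB.1.trace_cfc]
    exact_mod_cast key hconc
  · have hprod : ∏ i, hH.1.eigenvalues i ≤ (∏ i, hA.1.eigenvalues i) * ∏ i, hB.1.eigenvalues i :=
      (prod_le_prod_of_forall_sum_log_add_le (a := Sum.elim hA.1.eigenvalues hB.1.eigenvalues)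
        hH.eigenvalues_nonneg (Sum.forall.2 ⟨hA.eigenvalues_nonneg, hB.eigenvalues_nonneg⟩)
        fun ε hε => by simpa [Fintype.sum_sum_type] using key (Real.concaveOn_log_add hε)).trans_eq
      (Fintype.prod_sum_type _)
    rw [hH.1.det_eq_prod_eigenvalues, hA.1.det_eq_prod_eigenvalues, hB.1.det_eq_prod_eigenvalues]
    exact_mod_cast hprod
end

section
/- Let A = (a_{i,j}) be a positive semidefinite matrix in M_n(ℂ). Then A can be written as A = Σ_{i=1}^n a_{i,i} F_i for some rank-one orthogonal projections F_1, …, F_n in M_n(ℂ). -/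
/-!
Let `S = A^{1/2}`, which is Hermitian, and let `sᵢ` be its `i`-th column. Then
`A = S Sᴴ = ∑ᵢ sᵢ sᵢᴴ`, while `aᵢᵢ = (Sᴴ S)ᵢᵢ = ‖sᵢ‖²`. Hence `A = ∑ᵢ aᵢᵢ Fᵢ`, where
`Fᵢ = sᵢ sᵢᴴ / ‖sᵢ‖²` is the orthogonal projection onto the line through `sᵢ`.
-/

open Matrix ComplexOrder

namespace Matrix

variable {n 𝕜 : Type*} [Fintype n]

section CommStarRing

variable [CommRing 𝕜] [StarRing 𝕜]

theorem conjTranspose_mul_self_apply_self (B : Matrix n n 𝕜) (i : n) :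
    (Bᴴ * B) i i = star (Bᵀ i) ⬝ᵥ Bᵀ i :=
  rfl

theorem mul_conjTranspose_eq_sum_vecMulVec (B : Matrix n n 𝕜) :
    B * Bᴴ = ∑ k, vecMulVec (Bᵀ k) (star (Bᵀ k)) := by
  ext i j
  simp [mul_apply, vecMulVec_apply, sum_apply]

end CommStarRing

section Field

variable [Field 𝕜] [StarRing 𝕜]

/-- The orthogonal projection `v vᴴ / ‖v‖²` onto the line spanned by `v`; it is `0` when `v = 0`. -/
noncomputable def lineProj (v : n → 𝕜) : Matrix n n 𝕜 :=
  (star v ⬝ᵥ v)⁻¹ • vecMulVec v (star v)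

theorem isHermitian_lineProj (v : n → 𝕜) : (lineProj v).IsHermitian := by
  rw [IsHermitian, lineProj, conjTranspose_smul, conjTranspose_vecMulVec, star_star, star_inv₀,
    ← star_dotProduct]

theorem rank_lineProj_le_one (v : n → 𝕜) : (lineProj v).rank ≤ 1 := by
  rw [lineProj, ← smul_vecMulVec]
  exact rank_vecMulVec_le _ _

variable [PartialOrder 𝕜] [StarOrderedRing 𝕜]

theorem lineProj_mul_self (v : n → 𝕜) : lineProj v * lineProj v = lineProj v := by
  obtain rfl | hv := eq_or_ne v 0
  · simp [lineProj]
  have hd : star v ⬝ᵥ v ≠ 0 := dotProduct_star_self_eq_zero.not.mpr hv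
  rw [lineProj, smul_mul_smul_comm, vecMulVec_mul_vecMulVec, vecMulVec_smul, smul_smul]
  congr 1
  field_simp

theorem dotProduct_star_self_smul_lineProj (v : n → 𝕜) :
    (star v ⬝ᵥ v) • lineProj v = vecMulVec v (star v) := by
  obtain rfl | hv := eq_or_ne v 0
  · simp [lineProj]
  have hd : star v ⬝ᵥ v ≠ 0 := dotProduct_star_self_eq_zero.not.mpr hv
  rw [lineProj, smul_smul, mul_inv_cancel₀ hd, one_smul]

theorem IsHermitian.eq_sum_diag_smul_lineProj {A S : Matrix n n 𝕜} (hS : S.IsHermitian)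
    (hSS : S * S = A) : A = ∑ i, A i i • lineProj (Sᵀ i) := by
  have hdiag (i : n) : A i i = star (Sᵀ i) ⬝ᵥ Sᵀ i := by
    rw [← conjTranspose_mul_self_apply_self, hS.eq, hSS]
  simp_rw [hdiag, dotProduct_star_self_smul_lineProj]
  rw [← mul_conjTranspose_eq_sum_vecMulVec, hS.eq, hSS]

end Field

open scoped MatrixOrder in
theorem PosSemidef.exists_isHermitian_mul_self_eq [DecidableEq n] [RCLike 𝕜] {A : Matrix n n 𝕜}
    (hA : A.PosSemidef) : ∃ S : Matrix n n 𝕜, S.IsHermitian ∧ S * S = A :=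
  ⟨CFC.sqrt A, (CFC.sqrt_nonneg A).posSemidef.isHermitian, CFC.sqrt_mul_sqrt_self A hA.nonneg⟩

end Matrix

/-- A positive semidefinite matrix is a combination `A = Σᵢ aᵢᵢ Fᵢ` of rank-one
orthogonal projections weighted by its diagonal entries (rank `≤ 1` being
allowed when `aᵢᵢ = 0`). -/
theorem posSemidef_eq_sum_diag_smul_projections {n : ℕ}
    {A : Matrix (Fin n) (Fin n) ℂ} (hA : A.PosSemidef) :
    ∃ F : Fin n → Matrix (Fin n) (Fin n) ℂ,
      (∀ i, (F i).IsHermitian) ∧ (∀ i, F i * F i = F i) ∧ (∀ i, (F i).rank ≤ 1) ∧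
      A = ∑ i, A i i • F i := by
  obtain ⟨S, hS, hSS⟩ := hA.exists_isHermitian_mul_self_eq
  exact ⟨fun i ↦ lineProj (Sᵀ i), fun _ ↦ isHermitian_lineProj _, fun _ ↦ lineProj_mul_self _,
    fun _ ↦ rank_lineProj_le_one _, hS.eq_sum_diag_smul_lineProj hSS⟩
end

section
/- Let g : [0,∞) → [0,∞) be convex with g(0) = 0, and A, B ∈ M_n(ℂ)^+. Then det^{1/n} g(A+B) ≥ det^{1/n} g(A) + det^{1/n} g(B). -/
/-!
Write `g t = t * φ t` with `φ = slope g 0`, which is nondecreasing on `[0, ∞)` because `g` is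
convex with `g 0 = 0`. Then `det g(X) = det X * ∏ φ(λⱼ(X))`. Weyl's monotonicity theorem,
`λⱼ(A) ≤ λⱼ(A + B)` for eigenvalues listed in decreasing order, gives
`det g(A) ≤ det A * ∏ φ(λⱼ(A + B))`, and likewise for `B`. Taking `n`-th roots, Minkowski's
determinant inequality `det^{1/n} A + det^{1/n} B ≤ det^{1/n} (A + B)` finishes the proof.
Minkowski's inequality reduces, by congruence with a factor `R` of `A + B = Rᴴ R`, to the case
`A + B = 1`, where AM-GM bounds `det^{1/n}` by `tr / n`.
-/

open Matrix ComplexOrder Module Submodule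
open scoped InnerProductSpace

theorem ConvexOn.monotoneOn_slope_Ici {g : ℝ → ℝ} {a : ℝ} (hg : ConvexOn ℝ (Set.Ici a) g)
    (hmin : ∀ x, a ≤ x → g a ≤ g x) : MonotoneOn (slope g a) (Set.Ici a) := by
  intro x hx y hy hxy
  rcases (Set.mem_Ici.1 hx).eq_or_lt with rfl | hax
  · rw [slope_same]
    exact (slope_nonneg_iff_of_le hy).2 (hmin y hy)
  · exact hg.slope_mono Set.self_mem_Ici ⟨hx, hax.ne'⟩ ⟨hy, (hax.trans_le hxy).ne'⟩ hxy

theorem Module.Basis.finrank_span_image {ι K V : Type*} [DivisionRing K] [AddCommGroup V]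
    [Module K V] (b : Basis ι K V) (s : Finset ι) :
    finrank K (span K (b '' s)) = s.card := by
  classical
  rw [← Finset.coe_image, finrank_span_finset_eq_card,
    Finset.card_image_of_injective _ b.injective]
  rw [Finset.coe_image]
  exact (b.linearIndepOn _).id_image

namespace LinearMap.IsSymmetric

variable {𝕜 E : Type*} [RCLike 𝕜] [NormedAddCommGroup E] [InnerProductSpace 𝕜 E]
  [FiniteDimensional 𝕜 E] {n : ℕ} (hn : finrank 𝕜 E = n) {T S : E →ₗ[𝕜] E}

theorem re_inner_apply_self_eq_sum (hT : T.IsSymmetric) (x : E) :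
    RCLike.re ⟪T x, x⟫_𝕜 =
      ∑ i, hT.eigenvalues hn i * ‖(hT.eigenvectorBasis hn).repr x i‖ ^ 2 := by
  rw [← (hT.eigenvectorBasis hn).sum_inner_mul_inner, map_sum]
  refine Finset.sum_congr rfl fun i _ => ?_
  rw [← inner_conj_symm, ← OrthonormalBasis.repr_apply_apply, eigenvectorBasis_apply_self_apply,
    ← OrthonormalBasis.repr_apply_apply, map_mul (starRingEnd 𝕜), RCLike.conj_ofReal,
    mul_assoc, RCLike.conj_mul, ← RCLike.ofReal_pow, ← RCLike.ofReal_mul, RCLike.ofReal_re]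

theorem mul_norm_sq_le_re_inner_apply_self (hT : T.IsSymmetric) {x : E} {c : ℝ}
    (hx : ∀ i, (hT.eigenvectorBasis hn).repr x i ≠ 0 → c ≤ hT.eigenvalues hn i) :
    c * ‖x‖ ^ 2 ≤ RCLike.re ⟪T x, x⟫_𝕜 := by
  rw [re_inner_apply_self_eq_sum hn hT, ← (hT.eigenvectorBasis hn).repr.norm_map,
    EuclideanSpace.norm_sq_eq, Finset.mul_sum]
  refine Finset.sum_le_sum fun i _ => ?_
  by_cases hi : (hT.eigenvectorBasis hn).repr x i = 0
  · simp [hi]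
  · exact mul_le_mul_of_nonneg_right (hx i hi) (by positivity)

theorem re_inner_apply_self_le_mul_norm_sq (hT : T.IsSymmetric) {x : E} {c : ℝ}
    (hx : ∀ i, (hT.eigenvectorBasis hn).repr x i ≠ 0 → hT.eigenvalues hn i ≤ c) :
    RCLike.re ⟪T x, x⟫_𝕜 ≤ c * ‖x‖ ^ 2 := by
  rw [re_inner_apply_self_eq_sum hn hT, ← (hT.eigenvectorBasis hn).repr.norm_map,
    EuclideanSpace.norm_sq_eq, Finset.mul_sum]
  refine Finset.sum_le_sum fun i _ => ?_
  by_cases hi : (hT.eigenvectorBasis hn).repr x i = 0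
  · simp [hi]
  · exact mul_le_mul_of_nonneg_right (hx i hi) (by positivity)

/-- Weyl's monotonicity theorem. The span of the first `k + 1` eigenvectors of `T` and that of
the last `n - k` eigenvectors of `S` meet in a nonzero `x`, on which the Rayleigh quotients
compare as `λₖ(T) ≤ R_T(x) ≤ R_S(x) ≤ λₖ(S)`. -/
theorem eigenvalues_le_of_isPositive_sub (hT : T.IsSymmetric) (hS : S.IsSymmetric)
    (hST : (S - T).IsPositive) (k : Fin n) : hT.eigenvalues hn k ≤ hS.eigenvalues hn k := by
  by_contra! hlt
  set bT := (hT.eigenvectorBasis hn).toBasis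
  set bS := (hS.eigenvectorBasis hn).toBasis
  have hdim : finrank 𝕜 E < finrank 𝕜 (span 𝕜 (bT '' ↑(Finset.Iic k))) +
      finrank 𝕜 (span 𝕜 (bS '' ↑(Finset.Ici k))) := by
    rw [bT.finrank_span_image, bS.finrank_span_image, Fin.card_Iic, Fin.card_Ici, hn]
    omega
  obtain ⟨x, hxT, hxS, hx0⟩ : ∃ x ∈ span 𝕜 (bT '' ↑(Finset.Iic k)),
      x ∈ span 𝕜 (bS '' ↑(Finset.Ici k)) ∧ x ≠ 0 := by
    by_contra! h
    exact (finrank_add_finrank_le_of_disjoint (disjoint_def.2 h)).not_gt hdim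
  have hTx : hT.eigenvalues hn k * ‖x‖ ^ 2 ≤ RCLike.re ⟪T x, x⟫_𝕜 := by
    refine mul_norm_sq_le_re_inner_apply_self hn hT fun i hi => hT.eigenvalues_antitone hn ?_
    simpa using bT.mem_span_image.1 hxT (by simpa [bT] using hi)
  have hSx : RCLike.re ⟪S x, x⟫_𝕜 ≤ hS.eigenvalues hn k * ‖x‖ ^ 2 := by
    refine re_inner_apply_self_le_mul_norm_sq hn hS fun i hi => hS.eigenvalues_antitone hn ?_
    simpa using bS.mem_span_image.1 hxS (by simpa [bS] using hi)
  have hTS : RCLike.re ⟪T x, x⟫_𝕜 ≤ RCLike.re ⟪S x, x⟫_𝕜 := by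
    have := hST.re_inner_nonneg_left x
    rwa [sub_apply, inner_sub_left, map_sub, sub_nonneg] at this
  have := mul_lt_mul_of_pos_right hlt (by positivity : 0 < ‖x‖ ^ 2)
  linarith

end LinearMap.IsSymmetric

namespace Matrix

variable {𝕜 m : Type*} [RCLike 𝕜] [Fintype m] [DecidableEq m] {A B S : Matrix m m 𝕜}

-- `eigenvalues₀` is sorted decreasingly, whereas `eigenvalues` reindexes it by an arbitrary
-- bijection `m ≃ Fin (Fintype.card m)`.
theorem IsHermitian.eigenvalues₀_le_of_posSemidef_sub (hA : A.IsHermitian) (hS : S.IsHermitian)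
    (hAS : (S - A).PosSemidef) (k : Fin (Fintype.card m)) :
    hA.eigenvalues₀ k ≤ hS.eigenvalues₀ k :=
  LinearMap.IsSymmetric.eigenvalues_le_of_isPositive_sub _ _ _
    (by rwa [← map_sub, isPositive_toEuclideanLin_iff]) k

theorem IsHermitian.re_det_cfc (hA : A.IsHermitian) (f : ℝ → ℝ) :
    RCLike.re (cfc f A).det = ∏ j, f (hA.eigenvalues₀ j) := by
  rw [← Equiv.prod_comp (Fintype.equivOfCardEq (Fintype.card_fin _)).symm, hA.cfc_eq,
    IsHermitian.cfc, Unitary.conjStarAlgAut_apply, det_mul_right_comm]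
  simp [Function.comp_def, IsHermitian.eigenvalues, ← RCLike.ofReal_prod, -map_prod]

theorem IsHermitian.re_det (hA : A.IsHermitian) : RCLike.re A.det = ∏ j, hA.eigenvalues₀ j := by
  simpa [cfc_id ℝ A hA.isSelfAdjoint] using hA.re_det_cfc id

theorem IsHermitian.re_trace (hA : A.IsHermitian) :
    RCLike.re A.trace = ∑ j, hA.eigenvalues₀ j := by
  simp only [hA.trace_eq_sum_eigenvalues, ← RCLike.ofReal_sum, RCLike.ofReal_re]
  exact Equiv.sum_comp (Fintype.equivOfCardEq (Fintype.card_fin _)).symm hA.eigenvalues₀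

theorem IsHermitian.im_det (hA : A.IsHermitian) : RCLike.im A.det = 0 := by
  rw [← RCLike.conj_eq_iff_im, ← RCLike.star_def, ← det_conjTranspose, hA.eq]

theorem IsHermitian.re_det_conjTranspose_mul_mul (hA : A.IsHermitian) (R : Matrix m m 𝕜) :
    RCLike.re (Rᴴ * A * R).det = RCLike.re A.det * RCLike.re (Rᴴ * R).det := by
  rw [det_mul, det_mul, det_mul, mul_comm Rᴴ.det, mul_assoc, RCLike.mul_re, hA.im_det, zero_mul,
    sub_zero]

theorem PosSemidef.eigenvalues₀_nonneg (hA : A.PosSemidef) (j : Fin (Fintype.card m)) :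
    0 ≤ hA.1.eigenvalues₀ j := by
  simpa [IsHermitian.eigenvalues] using
    hA.eigenvalues_nonneg (Fintype.equivOfCardEq (Fintype.card_fin _) j)

theorem PosSemidef.re_det_nonneg (hA : A.PosSemidef) : 0 ≤ RCLike.re A.det := by
  rw [hA.1.re_det]
  exact Finset.prod_nonneg fun j _ => hA.eigenvalues₀_nonneg j

theorem PosSemidef.re_det_rpow_le_re_trace_div [Nonempty m] (hA : A.PosSemidef) :
    RCLike.re A.det ^ (1 / (Fintype.card m : ℝ)) ≤ RCLike.re A.trace / Fintype.card m := by
  have h := Real.geom_mean_le_arith_mean Finset.univ (fun _ => 1) hA.1.eigenvalues₀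
    (fun _ _ => zero_le_one) (by simp [Fintype.card_pos]) fun j _ => hA.eigenvalues₀_nonneg j
  simpa [hA.1.re_det, hA.1.re_trace] using h

theorem PosSemidef.re_det_rpow_add_le_one_of_add_eq_one [Nonempty m] (hA : A.PosSemidef)
    (hB : B.PosSemidef) (hAB : A + B = 1) :
    RCLike.re A.det ^ (1 / (Fintype.card m : ℝ)) + RCLike.re B.det ^ (1 / (Fintype.card m : ℝ))
      ≤ 1 := by
  calc _ ≤ RCLike.re A.trace / Fintype.card m + RCLike.re B.trace / Fintype.card m :=
        add_le_add hA.re_det_rpow_le_re_trace_div hB.re_det_rpow_le_re_trace_div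
    _ = 1 := by
      rw [← add_div, ← map_add, ← trace_add, hAB, trace_one]
      simp [Fintype.card_ne_zero]

theorem PosSemidef.det_eq_zero_of_det_add_eq_zero (hA : A.PosSemidef) (hB : B.PosSemidef)
    (h : (A + B).det = 0) : A.det = 0 := by
  by_contra hA0
  exact ((hA.posDef_iff_det_ne_zero.2 hA0).add_posSemidef hB).det_pos.ne' h

open scoped MatrixOrder in
theorem PosSemidef.re_det_rpow_add_le [Nonempty m] (hA : A.PosSemidef) (hB : B.PosSemidef) :
    RCLike.re A.det ^ (1 / (Fintype.card m : ℝ)) + RCLike.re B.det ^ (1 / (Fintype.card m : ℝ))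
      ≤ RCLike.re (A + B).det ^ (1 / (Fintype.card m : ℝ)) := by
  set p := 1 / (Fintype.card m : ℝ)
  have hS := hA.add hB
  by_cases hdet : (A + B).det = 0
  · have hp : p ≠ 0 := by positivity
    simp [hA.det_eq_zero_of_det_add_eq_zero hB hdet,
      hB.det_eq_zero_of_det_add_eq_zero hA (by rwa [add_comm]), hdet, Real.zero_rpow hp]
  obtain ⟨R, hR, hRR⟩ := CStarAlgebra.isStrictlyPositive_iff_eq_star_mul_self.mp
    (hS.posDef_iff_det_ne_zero.2 hdet).isStrictlyPositive
  rw [star_eq_conjTranspose] at hRR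
  have hRdet : IsUnit R.det := (isUnit_iff_isUnit_det R).mp hR
  have hX := hA.conjTranspose_mul_mul_same R⁻¹
  have hY := hB.conjTranspose_mul_mul_same R⁻¹
  have hXY : (R⁻¹)ᴴ * A * R⁻¹ + (R⁻¹)ᴴ * B * R⁻¹ = 1 := by
    rw [← add_mul, ← mul_add, hRR, ← mul_assoc, ← conjTranspose_mul, mul_assoc,
      mul_nonsing_inv R hRdet, mul_one, conjTranspose_one]
  have hdet_congr (C : Matrix m m 𝕜) (hC : ((R⁻¹)ᴴ * C * R⁻¹).IsHermitian) :
      RCLike.re C.det = RCLike.re ((R⁻¹)ᴴ * C * R⁻¹).det * RCLike.re (A + B).det := by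
    have hC' : Rᴴ * ((R⁻¹)ᴴ * C * R⁻¹) * R = C := by
      rw [← mul_assoc, ← mul_assoc, ← conjTranspose_mul, nonsing_inv_mul R hRdet,
        conjTranspose_one, one_mul, nonsing_inv_mul_cancel_right R C hRdet]
    conv_lhs => rw [← hC']
    rw [hC.re_det_conjTranspose_mul_mul, ← hRR]
  set X := (R⁻¹)ᴴ * A * R⁻¹
  set Y := (R⁻¹)ᴴ * B * R⁻¹
  calc
    _ = (RCLike.re X.det ^ p + RCLike.re Y.det ^ p) * RCLike.re (A + B).det ^ p := by
      rw [hdet_congr A hX.1, hdet_congr B hY.1, Real.mul_rpow hX.re_det_nonneg hS.re_det_nonneg,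
        Real.mul_rpow hY.re_det_nonneg hS.re_det_nonneg, add_mul]
    _ ≤ _ := mul_le_of_le_one_left (Real.rpow_nonneg hS.re_det_nonneg p)
      (hX.re_det_rpow_add_le_one_of_add_eq_one hY hXY)

theorem IsHermitian.re_det_cfc_eq_mul_prod_slope (hA : A.IsHermitian) {g : ℝ → ℝ}
    (hg : g 0 = 0) :
    RCLike.re (cfc g A).det = RCLike.re A.det * ∏ j, slope g 0 (hA.eigenvalues₀ j) := by
  rw [hA.re_det_cfc, hA.re_det, ← Finset.prod_mul_distrib]
  refine Finset.prod_congr rfl fun j _ => ?_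
  simpa [hg] using (sub_smul_slope g 0 (hA.eigenvalues₀ j)).symm

theorem PosSemidef.re_det_cfc_nonneg (hA : A.PosSemidef) {g : ℝ → ℝ}
    (hg : ∀ x, 0 ≤ x → 0 ≤ g x) : 0 ≤ RCLike.re (cfc g A).det := by
  rw [hA.1.re_det_cfc]
  exact Finset.prod_nonneg fun j _ => hg _ (hA.eigenvalues₀_nonneg j)

theorem PosSemidef.prod_slope_nonneg (hA : A.PosSemidef) {g : ℝ → ℝ}
    (hg : ∀ x, 0 ≤ x → g 0 ≤ g x) : 0 ≤ ∏ j, slope g 0 (hA.1.eigenvalues₀ j) :=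
  Finset.prod_nonneg fun j _ =>
    (slope_nonneg_iff_of_le (hA.eigenvalues₀_nonneg j)).2 (hg _ (hA.eigenvalues₀_nonneg j))

theorem PosSemidef.re_det_cfc_le (hA : A.PosSemidef) (hS : S.IsHermitian)
    (hAS : (S - A).PosSemidef) {g : ℝ → ℝ} (hconv : ConvexOn ℝ (Set.Ici 0) g)
    (hmin : ∀ x, 0 ≤ x → g 0 ≤ g x) (hg : g 0 = 0) :
    RCLike.re (cfc g A).det ≤ RCLike.re A.det * ∏ j, slope g 0 (hS.eigenvalues₀ j) := by
  have hle := hA.1.eigenvalues₀_le_of_posSemidef_sub hS hAS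
  rw [hA.1.re_det_cfc_eq_mul_prod_slope hg]
  refine mul_le_mul_of_nonneg_left ?_ hA.re_det_nonneg
  refine Finset.prod_le_prod (fun j _ => ?_) fun j _ => ?_
  · exact (slope_nonneg_iff_of_le (hA.eigenvalues₀_nonneg j)).2
      (hmin _ (hA.eigenvalues₀_nonneg j))
  · exact hconv.monotoneOn_slope_Ici hmin (hA.eigenvalues₀_nonneg j)
      ((hA.eigenvalues₀_nonneg j).trans (hle j)) (hle j)

end Matrix

/-- **Minkowski-type determinantal inequality for convex functions
(Bourin–Lee).** For `g : [0,∞) → [0,∞)` convex with `g(0) = 0` and positive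
semidefinite `A, B ∈ M_n(ℂ)` (`n > 0`),
`det^{1/n} g(A+B) ≥ det^{1/n} g(A) + det^{1/n} g(B)`. -/
theorem det_root_convex_superadditive {n : ℕ} (hn : 0 < n)
    {A B : Matrix (Fin n) (Fin n) ℂ} (hA : A.PosSemidef) (hB : B.PosSemidef)
    (g : ℝ → ℝ) (hconv : ConvexOn ℝ (Set.Ici (0 : ℝ)) g)
    (hg0 : ∀ x : ℝ, 0 ≤ x → 0 ≤ g x) (hg00 : g 0 = 0) :
    (cfc g A).det.re ^ (1 / (n : ℝ)) + (cfc g B).det.re ^ (1 / (n : ℝ)) ≤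
      (cfc g (A + B)).det.re ^ (1 / (n : ℝ)) := by
  have : Nonempty (Fin n) := ⟨⟨0, hn⟩⟩
  have hmin : ∀ x, 0 ≤ x → g 0 ≤ g x := fun x hx => hg00.symm ▸ hg0 x hx
  have hS := hA.add hB
  have hdet := hA.re_det_rpow_add_le hB
  rw [Fintype.card_fin] at hdet
  set p := 1 / (n : ℝ)
  set P := ∏ j, slope g 0 (hS.1.eigenvalues₀ j)
  have hP : 0 ≤ P := hS.prod_slope_nonneg hmin
  have hgA := hA.re_det_cfc_le hS.1 (by rwa [add_sub_cancel_left]) hconv hmin hg00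
  have hgB := hB.re_det_cfc_le hS.1 (by rwa [add_sub_cancel_right]) hconv hmin hg00
  simp only [← RCLike.re_to_complex]
  calc
    _ ≤ (RCLike.re A.det * P) ^ p + (RCLike.re B.det * P) ^ p := by
      gcongr
      exacts [hA.re_det_cfc_nonneg hg0, hB.re_det_cfc_nonneg hg0]
    _ = (RCLike.re A.det ^ p + RCLike.re B.det ^ p) * P ^ p := by
      rw [Real.mul_rpow hA.re_det_nonneg hP, Real.mul_rpow hB.re_det_nonneg hP, add_mul]
    _ ≤ RCLike.re (A + B).det ^ p * P ^ p := by gcongr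
    _ = _ := by
      rw [← Real.mul_rpow hS.re_det_nonneg hP, hS.1.re_det_cfc_eq_mul_prod_slope hg00]
end

section
/- Let A, B be n×n Hermitian matrices and X, Y ∈ M_n(ℂ) with X*X + Y*Y = XX* + YY* = I. Then (X*AX + Y*BY) ⊕ (Y*AY + X*BX) is majorized by A ⊕ B; that is, for every k ≤ 2n the sum of the k largest eigenvalues of (X*AX+Y*BY) ⊕ (Y*AY+X*BX) is at most that of A ⊕ B, with equality of traces. -/
open Matrix ComplexOrder

/-- Eigenvalues of a Hermitian matrix (junk value `0` otherwise). -/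
noncomputable def herEigs {ι : Type*} [Fintype ι] [DecidableEq ι]
    (M : Matrix ι ι ℂ) : ι → ℝ :=
  if h : M.IsHermitian then h.eigenvalues else 0

/-- Sum of the `k` largest values of `f` (the maximum of `Σ_{i ∈ s} f i` over
subsets `s` of cardinality `k`). -/
noncomputable def kLargestSum {ι : Type*} [Fintype ι] (f : ι → ℝ) (k : ℕ) : ℝ :=
  sSup ((fun s : Finset ι => ∑ i ∈ s, f i) '' {s | s.card = k})

/-! With `V₁ = X ⊕ X` and `V₂ = [[0, Y], [Y, 0]]`, the map `Φ M = V₁ᴴ M V₁ + V₂ᴴ M V₂` sends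
`A ⊕ B` to the left-hand side, and the hypotheses on `X, Y` say that `Φ` is unital and trace
preserving. By Ky Fan's maximum principle, the sum of the `k` largest eigenvalues of a Hermitian
`H` is the maximum of `re tr (Q H)` over `0 ≤ Q ≤ 1` with `tr Q = k`: the maximum is attained at a
spectral projection, and in an eigenbasis of `H` the bound reduces to maximizing `∑ tᵢ λᵢ` over
weights `tᵢ ∈ [0, 1]` of total mass `k`. The dual map `Q ↦ ∑ Vⱼ Q Vⱼᴴ` preserves these
constraints and `tr (Q (Φ M)) = tr ((Φ* Q) M)`, which gives the inequalities. -/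

section kLargestSum

variable {ι : Type*} [Fintype ι]

lemma sum_le_kLargestSum (f : ι → ℝ) {s : Finset ι} :
    ∑ i ∈ s, f i ≤ kLargestSum f s.card :=
  le_csSup ((Set.toFinite _).image _ |>.bddAbove) ⟨s, rfl, rfl⟩

lemma exists_card_eq_sum_eq_kLargestSum (f : ι → ℝ) {k : ℕ} (hk : k ≤ Fintype.card ι) :
    ∃ s : Finset ι, s.card = k ∧ ∑ i ∈ s, f i = kLargestSum f k := by
  obtain ⟨s, -, hs⟩ := Finset.exists_subset_card_eq (s := Finset.univ) hk
  exact (Set.Nonempty.image _ ⟨s, hs⟩).csSup_mem ((Set.toFinite _).image _)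

lemma le_of_sum_eq_kLargestSum [DecidableEq ι] {f : ι → ℝ} {s : Finset ι}
    (hs : ∑ i ∈ s, f i = kLargestSum f s.card) {i j : ι} (hi : i ∈ s) (hj : j ∉ s) :
    f j ≤ f i := by
  have hji : j ∉ s.erase i := fun h => hj (Finset.mem_of_mem_erase h)
  have hcard : (insert j (s.erase i)).card = s.card := by
    rw [Finset.card_insert_of_notMem hji, Finset.card_erase_add_one hi]
  have hswap := hcard ▸ sum_le_kLargestSum f (s := insert j (s.erase i))
  rw [Finset.sum_insert hji, Finset.sum_erase_eq_sub hi] at hswap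
  linarith

lemma sum_mul_le_sum_of_threshold {f t : ι → ℝ} {s : Finset ι} {c : ℝ}
    (hs : ∀ i ∈ s, c ≤ f i) (hsc : ∀ j ∉ s, f j ≤ c)
    (ht0 : ∀ i, 0 ≤ t i) (ht1 : ∀ i, t i ≤ 1) (hts : ∑ i, t i = s.card) :
    ∑ i, t i * f i ≤ ∑ i ∈ s, f i := by
  classical
  have key : ∑ i, t i * (f i - c) ≤ ∑ i ∈ s, (f i - c) :=
    calc ∑ i, t i * (f i - c)
        = ∑ i ∈ s, t i * (f i - c) + ∑ j ∈ sᶜ, t j * (f j - c) :=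
          (Finset.sum_add_sum_compl s _).symm
      _ ≤ ∑ i ∈ s, (f i - c) + 0 := by
          gcongr with i hi j hj
          · exact mul_le_of_le_one_left (sub_nonneg.2 (hs i hi)) (ht1 i)
          · exact Finset.sum_nonpos fun j hj =>
              mul_nonpos_of_nonneg_of_nonpos (ht0 j) (sub_nonpos.2 (hsc j (Finset.mem_compl.1 hj)))
      _ = ∑ i ∈ s, (f i - c) := add_zero _
  simp only [mul_sub, Finset.sum_sub_distrib, ← Finset.sum_mul, hts, Finset.sum_const,
    nsmul_eq_mul] at key
  linarith

theorem sum_mul_le_kLargestSum (f t : ι → ℝ) (ht0 : ∀ i, 0 ≤ t i) (ht1 : ∀ i, t i ≤ 1)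
    {k : ℕ} (hts : ∑ i, t i = k) : ∑ i, t i * f i ≤ kLargestSum f k := by
  classical
  have hk : k ≤ Fintype.card ι := by
    have : ∑ i, t i ≤ ∑ _i : ι, (1 : ℝ) := Finset.sum_le_sum fun i _ => ht1 i
    exact_mod_cast (by simpa [hts] using this : (k : ℝ) ≤ Fintype.card ι)
  obtain ⟨s, rfl, hs⟩ := exists_card_eq_sum_eq_kLargestSum f hk
  rw [← hs]
  rcases s.eq_empty_or_nonempty with rfl | hne
  · have ht : ∀ i, t i = 0 := fun i =>
      (Finset.sum_eq_zero_iff_of_nonneg fun i _ => ht0 i).1 (by simpa using hts) i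
        (Finset.mem_univ i)
    simp [ht]
  · obtain ⟨i₀, hi₀, hmin⟩ := s.exists_min_image f hne
    exact sum_mul_le_sum_of_threshold hmin (fun j hj => le_of_sum_eq_kLargestSum hs hi₀ hj)
      ht0 ht1 hts

end kLargestSum

section Matrix

variable {ι : Type*} [Fintype ι] [DecidableEq ι]

lemma trace_mul_conj_diagonal (Q U : Matrix ι ι ℂ) (d : ι → ℂ) :
    (Q * (U * diagonal d * star U)).trace = ∑ i, (star U * Q * U) i i * d i := by
  rw [← mul_assoc, ← mul_assoc, trace_mul_comm, ← mul_assoc, ← mul_assoc]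
  simp [trace, mul_diagonal]

lemma Matrix.IsHermitian.eq_conj_diagonal {M : Matrix ι ι ℂ} (hM : M.IsHermitian) :
    M = (hM.eigenvectorUnitary : Matrix ι ι ℂ) * diagonal (fun i => (hM.eigenvalues i : ℂ)) *
      star (hM.eigenvectorUnitary : Matrix ι ι ℂ) := by
  conv_lhs => rw [hM.spectral_theorem, Unitary.conjStarAlgAut_apply]
  rfl

lemma re_trace_mul_le_kLargestSum {M Q : Matrix ι ι ℂ} (hM : M.IsHermitian)
    (hQ : Q.PosSemidef) (hQ1 : (1 - Q).PosSemidef) {k : ℕ} (htr : Q.trace = k) :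
    (Q * M).trace.re ≤ kLargestSum (herEigs M) k := by
  set U : Matrix ι ι ℂ := (hM.eigenvectorUnitary : Matrix ι ι ℂ)
  have hUU : star U * U = 1 := hM.eigenvectorUnitary.prop.1
  set R := star U * Q * U
  have hR : R.PosSemidef := by
    simpa [R, star_eq_conjTranspose] using hQ.conjTranspose_mul_mul_same U
  have hR1 : (1 - R).PosSemidef := by
    have h : 1 - R = Uᴴ * (1 - Q) * U := by
      rw [mul_sub, mul_one, sub_mul, ← star_eq_conjTranspose, hUU]
    exact h ▸ hQ1.conjTranspose_mul_mul_same U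
  have htrR : ∑ i, (R i i).re = k := by
    have : R.trace = Q.trace := by
      rw [trace_mul_cycle, hM.eigenvectorUnitary.prop.2, one_mul]
    simpa [trace, ← Complex.re_sum] using congrArg Complex.re (this.trans htr)
  rw [herEigs, dif_pos hM]
  conv_lhs => rw [hM.eq_conj_diagonal, trace_mul_conj_diagonal]
  simp only [Complex.re_sum, Complex.re_mul_ofReal]
  exact sum_mul_le_kLargestSum _ _ (fun i => (Complex.nonneg_iff.1 hR.diag_nonneg).1)
    (fun i => by simpa using (Complex.nonneg_iff.1 (hR1.diag_nonneg (i := i))).1) htrR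

/-- Witnessed by the spectral projection onto the eigenvectors indexed by `s`. -/
lemma Matrix.IsHermitian.exists_trace_mul_eq_sum_eigenvalues {H : Matrix ι ι ℂ}
    (hH : H.IsHermitian) (s : Finset ι) :
    ∃ P : Matrix ι ι ℂ, P.PosSemidef ∧ (1 - P).PosSemidef ∧ P.trace = s.card ∧
      (P * H).trace = ∑ i ∈ s, (hH.eigenvalues i : ℂ) := by
  set W : Matrix ι ι ℂ := (hH.eigenvectorUnitary : Matrix ι ι ℂ)
  have hWW : star W * W = 1 := hH.eigenvectorUnitary.prop.1
  have hWW' : W * star W = 1 := hH.eigenvectorUnitary.prop.2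
  let E (t : Finset ι) : Matrix ι ι ℂ := diagonal fun i => if i ∈ t then 1 else 0
  have hE (t : Finset ι) : (W * E t * star W).PosSemidef := by
    simpa [star_eq_conjTranspose] using
      (PosSemidef.diagonal fun i => by split_ifs <;> simp).mul_mul_conjTranspose_same W
  have h1E : 1 - E s = E sᶜ := by
    rw [← diagonal_one, diagonal_sub]
    congr 1; funext i
    by_cases hi : i ∈ s <;> simp [hi]
  refine ⟨W * E s * star W, hE s, ?_, ?_, ?_⟩
  · have h : 1 - W * E s * star W = W * E sᶜ * star W := by
      rw [← h1E, mul_sub, sub_mul, mul_one, hWW']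
    exact h ▸ hE sᶜ
  · rw [trace_mul_cycle, hWW, one_mul, trace_diagonal]
    simp [Finset.sum_ite_mem]
  · conv_lhs => rw [hH.eq_conj_diagonal, trace_mul_conj_diagonal]
    have h : star W * (W * E s * star W) * W = E s := by
      simp only [← mul_assoc, hWW, one_mul]
      rw [mul_assoc, hWW, mul_one]
    simp [W, h, E, Finset.sum_ite_mem]

end Matrix

section Kraus

variable {ι κ : Type*} [Fintype ι] [Fintype κ]

lemma trace_sum_conj_mul (V : κ → Matrix ι ι ℂ) (P M : Matrix ι ι ℂ) :
    ((∑ j, V j * P * (V j)ᴴ) * M).trace = (P * ∑ j, (V j)ᴴ * M * V j).trace := by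
  rw [Finset.sum_mul, Finset.mul_sum, trace_sum, trace_sum]
  refine Finset.sum_congr rfl fun j _ => ?_
  simp only [mul_assoc]
  rw [trace_mul_comm]
  simp only [mul_assoc]

lemma trace_sum_conj [DecidableEq ι] {V : κ → Matrix ι ι ℂ} (hV : ∑ j, V j * (V j)ᴴ = 1)
    (M : Matrix ι ι ℂ) :
    (∑ j, (V j)ᴴ * M * V j).trace = M.trace := by
  simpa [hV] using (trace_sum_conj_mul V 1 M).symm

lemma posSemidef_sum_conj {P : Matrix ι ι ℂ} (hP : P.PosSemidef) (V : κ → Matrix ι ι ℂ) :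
    (∑ j, V j * P * (V j)ᴴ).PosSemidef :=
  posSemidef_sum _ fun j _ => hP.mul_mul_conjTranspose_same (V j)

theorem kLargestSum_herEigs_sum_conj_le [DecidableEq ι] {M : Matrix ι ι ℂ}
    (hM : M.IsHermitian) {V : κ → Matrix ι ι ℂ}
    (hV₁ : ∑ j, (V j)ᴴ * V j = 1) (hV₂ : ∑ j, V j * (V j)ᴴ = 1)
    {k : ℕ} (hk : k ≤ Fintype.card ι) :
    kLargestSum (herEigs (∑ j, (V j)ᴴ * M * V j)) k ≤ kLargestSum (herEigs M) k := by
  have hH : (∑ j, (V j)ᴴ * M * V j).IsHermitian :=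
    isSelfAdjoint_sum _ fun j _ => isHermitian_conjTranspose_mul_mul (V j) hM
  obtain ⟨s, hs, -⟩ := exists_card_eq_sum_eq_kLargestSum (herEigs M) hk
  rw [herEigs, dif_pos hH]
  refine csSup_le ⟨_, s, hs, rfl⟩ ?_
  rintro _ ⟨s, rfl, rfl⟩
  obtain ⟨P, hP, hP1, htrP, hPH⟩ := hH.exists_trace_mul_eq_sum_eigenvalues s
  have hQ1 : 1 - ∑ j, V j * P * (V j)ᴴ = ∑ j, V j * (1 - P) * (V j)ᴴ := by
    simp only [mul_sub, sub_mul, mul_one, Finset.sum_sub_distrib, hV₂]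
  have htrQ : (∑ j, V j * P * (V j)ᴴ).trace = s.card := by
    simpa [hV₁, htrP] using trace_sum_conj_mul V P 1
  calc ∑ i ∈ s, hH.eigenvalues i
      = ((∑ j, V j * P * (V j)ᴴ) * M).trace.re := by
        rw [trace_sum_conj_mul, hPH, Complex.re_sum]
        simp
    _ ≤ kLargestSum (herEigs M) s.card :=
        re_trace_mul_le_kLargestSum hM (posSemidef_sum_conj hP V)
          (hQ1 ▸ posSemidef_sum_conj hP1 V) htrQ

end Kraus

/-- **A majorization (Bourin–Lee).** If `A, B` are Hermitian and
`X*X + Y*Y = XX* + YY* = I`, then `(X*AX + Y*BY) ⊕ (Y*AY + X*BX) ≺ A ⊕ B`: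
for every `k ≤ 2n` the sum of the `k` largest eigenvalues of the left-hand
side is at most that of `A ⊕ B`, and the traces are equal. -/
theorem block_majorization {n : ℕ}
    {A B X Y : Matrix (Fin n) (Fin n) ℂ}
    (hA : A.IsHermitian) (hB : B.IsHermitian)
    (h1 : Xᴴ * X + Yᴴ * Y = 1) (h2 : X * Xᴴ + Y * Yᴴ = 1) :
    (∀ k : ℕ, k ≤ 2 * n →
      kLargestSum (herEigs (Matrix.fromBlocks (Xᴴ * A * X + Yᴴ * B * Y) 0 0
        (Yᴴ * A * Y + Xᴴ * B * X))) k ≤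
      kLargestSum (herEigs (Matrix.fromBlocks A 0 0 B)) k) ∧
    (Matrix.fromBlocks (Xᴴ * A * X + Yᴴ * B * Y) 0 0
        (Yᴴ * A * Y + Xᴴ * B * X)).trace = (Matrix.fromBlocks A 0 0 B).trace := by
  let V : Fin 2 → Matrix (Fin n ⊕ Fin n) (Fin n ⊕ Fin n) ℂ :=
    ![fromBlocks X 0 0 X, fromBlocks 0 Y Y 0]
  have hM : (fromBlocks A 0 0 B).IsHermitian := IsHermitian.fromBlocks hA (by simp) hB
  have hV₁ : ∑ j, (V j)ᴴ * V j = 1 := by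
    simp [V, fromBlocks_conjTranspose, fromBlocks_multiply, fromBlocks_add, h1]
  have hV₂ : ∑ j, V j * (V j)ᴴ = 1 := by
    simp [V, fromBlocks_conjTranspose, fromBlocks_multiply, fromBlocks_add, h2]
  have hΦ : ∑ j, (V j)ᴴ * fromBlocks A 0 0 B * V j =
      fromBlocks (Xᴴ * A * X + Yᴴ * B * Y) 0 0 (Yᴴ * A * Y + Xᴴ * B * X) := by
    simp [V, fromBlocks_conjTranspose, fromBlocks_multiply, fromBlocks_add, add_comm]
  rw [← hΦ]
  refine ⟨fun k hk => kLargestSum_herEigs_sum_conj_le hM hV₁ hV₂ ?_, trace_sum_conj hV₂ _⟩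
  simpa [two_mul] using hk
end

section
/- Let A, B be n×n positive semidefinite matrices and X, Y ∈ M_n(ℂ) with X*X + Y*Y = XX* + YY* = I. Then det(X*AX + Y*BY) · det(Y*AY + X*BX) ≥ det A · det B. -/
/-!
It suffices to treat positive definite `A`, `B`, since otherwise `det A · det B = 0`.
Let `G = A # B` be the matrix geometric mean, so that `[[A, G], [G, B]] ≥ 0` and
`(det G)² = det A · det B`. Conjugating this block matrix by `diag(X, X)` and by `[[0, Y], [Y, 0]]`
and adding gives `[[P, Z], [Z, Q]] ≥ 0`, where `P`, `Q` are the two matrices of the statement and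
`Z = X*GX + Y*GY`; the Schur complement then yields `(det Z)² ≤ det P · det Q`.
It remains to see `det G ≤ det Z`. The map `Φ(G) = X*GX + Y*GY` is positive, unital and
trace-preserving, so in eigenbases of `G` and `Φ(G)` its matrix coefficients form a doubly
stochastic matrix `S` carrying the eigenvalues `λ` of `G` to the eigenvalues `μ = Sλ` of `Φ(G)`;
weighted AM-GM gives `∏ μ ≥ ∏ λ`.
-/

open Matrix ComplexOrder

namespace Matrix

variable {n : Type*} [Fintype n] [DecidableEq n]

theorem prod_le_prod_mulVec_of_mem_doublyStochastic
    {S : Matrix n n ℝ} (hS : S ∈ doublyStochastic ℝ n) {x : n → ℝ} (hx : 0 ≤ x) :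
    ∏ i, x i ≤ ∏ j, (S *ᵥ x) j :=
  calc ∏ i, x i = ∏ i, x i ^ ∑ j, S j i := by simp [sum_col_of_mem_doublyStochastic hS]
    _ = ∏ j, ∏ i, x i ^ S j i := by
      rw [Finset.prod_comm]
      exact Finset.prod_congr rfl fun i _ =>
        Real.rpow_sum_of_nonneg (hx i) fun j _ => nonneg_of_mem_doublyStochastic hS
    _ ≤ ∏ j, (S *ᵥ x) j :=
      Finset.prod_le_prod (fun j _ => Finset.prod_nonneg fun i _ => Real.rpow_nonneg (hx i) _)
        fun j _ => Real.geom_mean_le_arith_mean_weighted _ _ _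
          (fun i _ => nonneg_of_mem_doublyStochastic hS) (sum_row_of_mem_doublyStochastic hS j)
          fun i _ => hx i

omit [Fintype n] in
theorem posSemidef_single_one (i : n) : (single i i (1 : ℂ)).PosSemidef := by
  rw [← diagonal_single]
  exact PosSemidef.diagonal fun j => by by_cases h : j = i <;> simp [h]

theorem IsHermitian.eq_sum_eigenvalues_smul {G : Matrix n n ℂ} (hG : G.IsHermitian) :
    G = ∑ i, hG.eigenvalues i • ((hG.eigenvectorUnitary : Matrix n n ℂ) * single i i 1 *
      star (hG.eigenvectorUnitary : Matrix n n ℂ)) := by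
  conv_lhs => rw [hG.spectral_theorem, Unitary.conjStarAlgAut_apply, ← sum_single_eq_diagonal]
  simp only [Finset.mul_sum, Finset.sum_mul]
  refine Finset.sum_congr rfl fun i _ => ?_
  rw [← Matrix.smul_mul, ← Matrix.mul_smul, smul_single, Function.comp_apply,
    RCLike.real_smul_eq_coe_mul, mul_one]

structure IsDoublyStochasticMap (Φ : Matrix n n ℂ →ₗ[ℂ] Matrix n n ℂ) : Prop where
  posSemidef_map : ∀ {A}, A.PosSemidef → (Φ A).PosSemidef
  map_one : Φ 1 = 1
  trace_map : ∀ A, (Φ A).trace = A.trace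

/-- Entry `(j, i)` is `⟨v_j, Φ(u_i u_iᴴ) v_j⟩` for the columns `u_i` of `U` and `v_j` of `V`. -/
noncomputable def transferMatrix (Φ : Matrix n n ℂ →ₗ[ℂ] Matrix n n ℂ) (U V : Matrix n n ℂ) :
    Matrix n n ℝ :=
  of fun j i => ((star V * Φ (U * single i i 1 * star U) * V) j j).re

theorem transferMatrix_mulVec (Φ : Matrix n n ℂ →ₗ[ℂ] Matrix n n ℂ) (U V : Matrix n n ℂ)
    (c : n → ℝ) (j : n) :
    (transferMatrix Φ U V *ᵥ c) j =
      ((star V * Φ (∑ i, c i • (U * single i i 1 * star U)) * V) j j).re := by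
  simp only [map_sum, Finset.mul_sum, Finset.sum_mul, sum_apply, Complex.re_sum]
  simp [transferMatrix, mulVec, dotProduct, mul_comm]

theorem IsDoublyStochasticMap.transferMatrix_mem_doublyStochastic
    {Φ : Matrix n n ℂ →ₗ[ℂ] Matrix n n ℂ} (hΦ : IsDoublyStochasticMap Φ) {U V : Matrix n n ℂ}
    (hU : U ∈ unitary (Matrix n n ℂ)) (hV : V ∈ unitary (Matrix n n ℂ)) :
    transferMatrix Φ U V ∈ doublyStochastic ℝ n := by
  refine mem_doublyStochastic_iff_sum.2 ⟨fun j i => ?_, fun j => ?_, fun i => ?_⟩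
  · have hE := (hΦ.posSemidef_map ((posSemidef_single_one i).mul_mul_conjTranspose_same U))
    exact (Complex.le_def.1 (hE.conjTranspose_mul_mul_same V).diag_nonneg).1
  · have hE : ∑ i, U * single i i (1 : ℂ) * star U = 1 := by
      rw [← Finset.sum_mul, ← Finset.mul_sum, sum_single_one, mul_one,
        Unitary.mul_star_self_of_mem hU]
    simpa [mulVec, dotProduct, hE, hΦ.map_one, Unitary.star_mul_self_of_mem hV] using
      transferMatrix_mulVec Φ U V 1 j
  · calc ∑ j, transferMatrix Φ U V j i
        = (trace (star V * Φ (U * single i i 1 * star U) * V)).re := by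
          simp [transferMatrix, trace, Complex.re_sum]
      _ = (trace (single i i (1 : ℂ))).re := by
          rw [trace_mul_cycle, Unitary.mul_star_self_of_mem hV, one_mul, hΦ.trace_map,
            trace_mul_cycle, Unitary.star_mul_self_of_mem hU, one_mul]
      _ = 1 := by simp

theorem IsDoublyStochasticMap.det_le_det_map {Φ : Matrix n n ℂ →ₗ[ℂ] Matrix n n ℂ}
    (hΦ : IsDoublyStochasticMap Φ) {G : Matrix n n ℂ} (hG : G.PosSemidef) :
    G.det ≤ (Φ G).det := by
  have hM := hΦ.posSemidef_map hG
  set U : Matrix n n ℂ := (hG.1.eigenvectorUnitary : Matrix n n ℂ)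
  set V : Matrix n n ℂ := (hM.1.eigenvectorUnitary : Matrix n n ℂ)
  have hdiag : star V * Φ G * V = diagonal (RCLike.ofReal ∘ hM.1.eigenvalues) := by
    simpa [Unitary.conjStarAlgAut_star_apply] using hM.1.conjStarAlgAut_star_eigenvectorUnitary
  have hS : transferMatrix Φ U V *ᵥ hG.1.eigenvalues = hM.1.eigenvalues := funext fun j => by
    rw [transferMatrix_mulVec, ← hG.1.eq_sum_eigenvalues_smul, hdiag]
    simp
  rw [hG.1.det_eq_prod_eigenvalues, hM.1.det_eq_prod_eigenvalues, ← hS]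
  exact_mod_cast prod_le_prod_mulVec_of_mem_doublyStochastic
    (hΦ.transferMatrix_mem_doublyStochastic hG.1.eigenvectorUnitary.2 hM.1.eigenvectorUnitary.2)
    hG.eigenvalues_nonneg

def krausMap (X Y : Matrix n n ℂ) : Matrix n n ℂ →ₗ[ℂ] Matrix n n ℂ where
  toFun G := Xᴴ * G * X + Yᴴ * G * Y
  map_add' G H := by simp only [Matrix.mul_add, Matrix.add_mul]; abel
  map_smul' c G := by simp only [Matrix.mul_smul, Matrix.smul_mul, smul_add, RingHom.id_apply]

theorem isDoublyStochasticMap_krausMap {X Y : Matrix n n ℂ} (h1 : Xᴴ * X + Yᴴ * Y = 1)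
    (h2 : X * Xᴴ + Y * Yᴴ = 1) : IsDoublyStochasticMap (krausMap X Y) where
  posSemidef_map hA := (hA.conjTranspose_mul_mul_same X).add (hA.conjTranspose_mul_mul_same Y)
  map_one := by simpa [krausMap] using h1
  trace_map A := by
    simp only [krausMap, LinearMap.coe_mk, AddHom.coe_mk, trace_add]
    rw [trace_mul_cycle, trace_mul_cycle Yᴴ, ← trace_add, ← Matrix.add_mul, h2, Matrix.one_mul]

omit [DecidableEq n] in
theorem PosSemidef.fromBlocks_conjTranspose_mul_mul_add {A B G : Matrix n n ℂ}
    (h : (fromBlocks A G G B).PosSemidef) (X Y : Matrix n n ℂ) :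
    (fromBlocks (Xᴴ * A * X + Yᴴ * B * Y) (Xᴴ * G * X + Yᴴ * G * Y)
      (Xᴴ * G * X + Yᴴ * G * Y) (Yᴴ * A * Y + Xᴴ * B * X)).PosSemidef := by
  have hsum : fromBlocks (Xᴴ * A * X + Yᴴ * B * Y) (Xᴴ * G * X + Yᴴ * G * Y)
      (Xᴴ * G * X + Yᴴ * G * Y) (Yᴴ * A * Y + Xᴴ * B * X) =
      (fromBlocks X 0 0 X)ᴴ * fromBlocks A G G B * fromBlocks X 0 0 X +
      (fromBlocks 0 Y Y 0)ᴴ * fromBlocks A G G B * fromBlocks 0 Y Y 0 := by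
    simp only [fromBlocks_conjTranspose, fromBlocks_multiply, fromBlocks_add,
      conjTranspose_zero, Matrix.zero_mul, Matrix.mul_zero, add_zero, zero_add]
    congr 1
    abel
  rw [hsum]
  exact (h.conjTranspose_mul_mul_same _).add (h.conjTranspose_mul_mul_same _)

theorem PosDef.conjTranspose_mul_mul_add {A B X Y : Matrix n n ℂ} (hA : A.PosDef)
    (hB : B.PosDef) (h : Xᴴ * X + Yᴴ * Y = 1) : (Xᴴ * A * X + Yᴴ * B * Y).PosDef := by
  refine .of_dotProduct_mulVec_pos ((hA.posSemidef.conjTranspose_mul_mul_same X).add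
    (hB.posSemidef.conjTranspose_mul_mul_same Y)).1 fun x hx => ?_
  have hquad (M K : Matrix n n ℂ) :
      star x ⬝ᵥ ((Kᴴ * M * K) *ᵥ x) = star (K *ᵥ x) ⬝ᵥ (M *ᵥ (K *ᵥ x)) := by
    rw [← mulVec_mulVec, ← mulVec_mulVec, dotProduct_mulVec, ← star_mulVec]
  rw [add_mulVec, dotProduct_add, hquad, hquad]
  by_cases hX : X *ᵥ x = 0
  · have hY : Y *ᵥ x ≠ 0 := fun hY => hx <| by
      simpa [add_mulVec, ← mulVec_mulVec, hX, hY] using congrArg (· *ᵥ x) h.symm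
    exact add_pos_of_nonneg_of_pos (hA.posSemidef.dotProduct_mulVec_nonneg _)
      (hB.dotProduct_mulVec_pos hY)
  · exact add_pos_of_pos_of_nonneg (hA.dotProduct_mulVec_pos hX)
      (hB.posSemidef.dotProduct_mulVec_nonneg _)

section MatrixOrder

open scoped MatrixOrder

theorem det_le_one_of_le_one {N : Matrix n n ℂ} (h0 : 0 ≤ N) (h1 : N ≤ 1) : N.det ≤ 1 := by
  have hN := nonneg_iff_posSemidef.mp h0
  have hspec := (CFC.le_one_iff (R := ℝ) N hN.1.isSelfAdjoint).mp h1
  rw [hN.1.det_eq_prod_eigenvalues, ← RCLike.ofReal_prod, ← RCLike.ofReal_one,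
    RCLike.ofReal_le_ofReal]
  exact Finset.prod_le_one (fun j _ => hN.eigenvalues_nonneg j)
    fun j _ => hspec _ (hN.1.eigenvalues_mem_spectrum_real j)

theorem det_le_det_of_le {K L : Matrix n n ℂ} (hK : 0 ≤ K) (hKL : K ≤ L) (hL : L.PosDef) :
    K.det ≤ L.det := by
  set R := CFC.sqrt L
  have hRR : R * R = L := CFC.sqrt_mul_sqrt_self L
  have hRu : IsUnit R.det := (isUnit_iff_isUnit_det R).mp ((CFC.isUnit_sqrt_iff L).mpr hL.isUnit)
  have hR : IsSelfAdjoint R⁻¹ := by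
    rw [IsSelfAdjoint, star_eq_conjTranspose, conjTranspose_nonsing_inv, ← star_eq_conjTranspose,
      (IsSelfAdjoint.of_nonneg (CFC.sqrt_nonneg L)).star_eq]
  have hRLR : R⁻¹ * L * R⁻¹ = 1 := by
    rw [← hRR, ← mul_assoc, nonsing_inv_mul _ hRu, one_mul, mul_nonsing_inv _ hRu]
  have hdet : K.det = (R⁻¹ * K * R⁻¹).det * L.det := by
    rw [← hRR, det_mul, det_mul, det_mul, det_nonsing_inv, Ring.inverse_eq_inv']
    field_simp [hRu.ne_zero]
  rw [hdet]
  exact mul_le_of_le_one_left (nonneg_iff_posSemidef.mp (hK.trans hKL)).det_nonneg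
    (det_le_one_of_le_one (by simpa using hR.conjugate_le_conjugate hK)
      (hRLR ▸ hR.conjugate_le_conjugate hKL))

theorem PosSemidef.star_det_mul_det_le_of_fromBlocks {P Q Z : Matrix n n ℂ} (hP : P.PosDef)
    (hQ : Q.PosDef) (h : (fromBlocks P Z Zᴴ Q).PosSemidef) :
    star Z.det * Z.det ≤ P.det * Q.det := by
  have := hP.isUnit.invertible
  have hschur := (PosDef.fromBlocks₁₁ Z Q hP).mp h
  have hle := det_le_det_of_le (hP.inv.posSemidef.conjTranspose_mul_mul_same Z).nonneg
    (le_iff.mpr hschur) hQ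
  have hPdet : P.det ≠ 0 := hP.det_pos.ne'
  calc star Z.det * Z.det = (Zᴴ * P⁻¹ * Z).det * P.det := by
        rw [det_mul, det_mul, det_conjTranspose, det_nonsing_inv, Ring.inverse_eq_inv']
        field_simp
    _ ≤ Q.det * P.det := mul_le_mul_of_nonneg_right hle hP.posSemidef.det_nonneg
    _ = P.det * Q.det := mul_comm _ _

noncomputable def geomMean (A B : Matrix n n ℂ) : Matrix n n ℂ :=
  CFC.sqrt A * CFC.sqrt ((CFC.sqrt A)⁻¹ * B * (CFC.sqrt A)⁻¹) * CFC.sqrt A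

theorem posSemidef_geomMean (A B : Matrix n n ℂ) : (geomMean A B).PosSemidef := by
  have hS := nonneg_iff_posSemidef.mp (CFC.sqrt_nonneg A)
  have := (nonneg_iff_posSemidef.mp (CFC.sqrt_nonneg
    ((CFC.sqrt A)⁻¹ * B * (CFC.sqrt A)⁻¹))).conjTranspose_mul_mul_same (CFC.sqrt A)
  rwa [hS.1.eq] at this

theorem geomMean_mul_inv_mul_geomMean {A B : Matrix n n ℂ} (hA : A.PosDef)
    (hB : B.PosSemidef) : geomMean A B * A⁻¹ * geomMean A B = B := by
  set S := CFC.sqrt A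
  have hSS : S * S = A := CFC.sqrt_mul_sqrt_self A
  have hS : S.IsHermitian := (nonneg_iff_posSemidef.mp (CFC.sqrt_nonneg A)).1
  have hSu : IsUnit S.det := (isUnit_iff_isUnit_det S).mp ((CFC.isUnit_sqrt_iff A).mpr hA.isUnit)
  have hC : CFC.sqrt (S⁻¹ * B * S⁻¹) * CFC.sqrt (S⁻¹ * B * S⁻¹) = S⁻¹ * B * S⁻¹ := by
    refine CFC.sqrt_mul_sqrt_self _ (nonneg_iff_posSemidef.mpr ?_)
    simpa [conjTranspose_nonsing_inv, hS.eq] using hB.conjTranspose_mul_mul_same S⁻¹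
  set C := CFC.sqrt (S⁻¹ * B * S⁻¹)
  have hSinv : S * S⁻¹ = 1 := mul_nonsing_inv S hSu
  have hinvS : S⁻¹ * S = 1 := nonsing_inv_mul S hSu
  calc geomMean A B * A⁻¹ * geomMean A B = S * C * (S * S⁻¹) * (S⁻¹ * S) * C * S := by
        rw [show A⁻¹ = S⁻¹ * S⁻¹ by rw [← Matrix.mul_inv_rev, hSS]]
        change S * C * S * (S⁻¹ * S⁻¹) * (S * C * S) = _
        simp only [Matrix.mul_assoc]
    _ = S * (S⁻¹ * B * S⁻¹) * S := by
        rw [hSinv, hinvS, Matrix.mul_one, Matrix.mul_one, ← hC]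
        simp only [Matrix.mul_assoc]
    _ = B := by
        rw [← Matrix.mul_assoc, ← Matrix.mul_assoc, hSinv, Matrix.one_mul, Matrix.mul_assoc, hinvS,
          Matrix.mul_one]

theorem det_geomMean_mul_self {A B : Matrix n n ℂ} (hA : A.PosDef) (hB : B.PosSemidef) :
    (geomMean A B).det * (geomMean A B).det = A.det * B.det := by
  have h := congrArg det (geomMean_mul_inv_mul_geomMean hA hB)
  rw [det_mul, det_mul, det_nonsing_inv, Ring.inverse_eq_inv'] at h
  have hAdet : A.det ≠ 0 := hA.det_pos.ne'
  rw [← h]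
  field_simp

theorem posSemidef_fromBlocks_geomMean {A B : Matrix n n ℂ} (hA : A.PosDef) (hB : B.PosSemidef) :
    (fromBlocks A (geomMean A B) (geomMean A B) B).PosSemidef := by
  have := hA.isUnit.invertible
  have hG := (posSemidef_geomMean A B).1
  -- the Schur complement `B - G A⁻¹ G` vanishes
  conv => arg 1; arg 3; rw [← hG.eq]
  rw [PosDef.fromBlocks₁₁ _ _ hA, hG.eq, geomMean_mul_inv_mul_geomMean hA hB, sub_self]
  exact PosSemidef.zero

end MatrixOrder

theorem det_mul_det_le_of_posDef {A B X Y : Matrix n n ℂ} (hA : A.PosDef) (hB : B.PosDef)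
    (h1 : Xᴴ * X + Yᴴ * Y = 1) (h2 : X * Xᴴ + Y * Yᴴ = 1) :
    A.det * B.det ≤ (Xᴴ * A * X + Yᴴ * B * Y).det * (Yᴴ * A * Y + Xᴴ * B * X).det := by
  have hblock :=
    (posSemidef_fromBlocks_geomMean hA hB.posSemidef).fromBlocks_conjTranspose_mul_mul_add X Y
  set G := geomMean A B
  set Z := Xᴴ * G * X + Yᴴ * G * Y
  have hG := posSemidef_geomMean A B
  have hΦ := isDoublyStochasticMap_krausMap h1 h2
  have hZ : Z.IsHermitian := (hΦ.posSemidef_map hG).1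
  have hGZ : G.det ≤ Z.det := hΦ.det_le_det_map hG
  nth_rewrite 2 [← hZ.eq] at hblock
  calc A.det * B.det = G.det * G.det := (det_geomMean_mul_self hA hB.posSemidef).symm
    _ ≤ Z.det * Z.det := mul_le_mul hGZ hGZ hG.det_nonneg (hG.det_nonneg.trans hGZ)
    _ = star Z.det * Z.det := by rw [← det_conjTranspose, hZ.eq]
    _ ≤ _ := hblock.star_det_mul_det_le_of_fromBlocks (hA.conjTranspose_mul_mul_add hB h1)
      (hA.conjTranspose_mul_mul_add hB (by rwa [add_comm]))

end Matrix

/-- **Determinantal inequality (Bourin–Lee).** For positive semidefinite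
`A, B` and `X, Y` with `X*X + Y*Y = XX* + YY* = I`,
`det(X*AX + Y*BY) · det(Y*AY + X*BX) ≥ det A · det B`. -/
theorem det_block_superadditive {n : ℕ}
    {A B X Y : Matrix (Fin n) (Fin n) ℂ}
    (hA : A.PosSemidef) (hB : B.PosSemidef)
    (h1 : Xᴴ * X + Yᴴ * Y = 1) (h2 : X * Xᴴ + Y * Yᴴ = 1) :
    A.det * B.det ≤ (Xᴴ * A * X + Yᴴ * B * Y).det * (Yᴴ * A * Y + Xᴴ * B * X).det := by
  have hP := (hA.conjTranspose_mul_mul_same X).add (hB.conjTranspose_mul_mul_same Y)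
  have hQ := (hA.conjTranspose_mul_mul_same Y).add (hB.conjTranspose_mul_mul_same X)
  rcases eq_or_ne A.det 0 with hA0 | hA0
  · rw [hA0, zero_mul]
    exact mul_nonneg hP.det_nonneg hQ.det_nonneg
  rcases eq_or_ne B.det 0 with hB0 | hB0
  · rw [hB0, mul_zero]
    exact mul_nonneg hP.det_nonneg hQ.det_nonneg
  exact det_mul_det_le_of_posDef (hA.posDef_iff_det_ne_zero.2 hA0)
    (hB.posDef_iff_det_ne_zero.2 hB0) h1 h2
end

section
/- Let A ∈ M_d(ℂ) be normal, h a unit vector, S = h^⊥ the orthogonal hyperplane, and A_S the compression of A to S. Set β = ‖Ah‖² − |⟨h, Ah⟩|². Then for every j = 1, …, d−1, μ_j(A)² ≥ μ_j(A_S)² ≥ μ_{j+1}(A)² − β, where μ_j denotes the j-th largest singular value. -/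
/-!
Write `B = Vᴴ A V`. Since `V Vᴴ` is the orthogonal projection onto `h^⊥`,
`‖B x‖² = ‖A V x‖² - |⟨Vᴴ Aᴴ h, x⟩|²` and `‖Vᴴ Aᴴ h‖² = ‖Aᴴ h‖² - |⟨h, Aᴴ h⟩|²`, which is `β`
when `A` is normal. So `‖A V x‖² - β ‖x‖² ≤ ‖B x‖² ≤ ‖A V x‖²` for the isometry `V` onto a
hyperplane, and both bounds follow from the min-max principle: `μ_k(T)² ‖x‖² ≤ ‖T x‖²` for `x`
orthogonal to the right singular vectors of `T` after the `k`-th, the reverse inequality for `x`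
orthogonal to those before it, and counting dimensions produces a nonzero `x` orthogonal to the
relevant singular vectors of `B` with `V x` orthogonal to those of `A`.
-/

open Matrix ComplexOrder

/-- The `k`-th largest singular value (`0`-indexed) of a square matrix, with
the convention that it is `0` when `k` exceeds the size: the `k`-th entry of
the decreasingly sorted list of square roots of the eigenvalues of `XᴴX`. -/
noncomputable def sval {e : ℕ} (X : Matrix (Fin e) (Fin e) ℂ) (k : ℕ) : ℝ :=
  Real.sqrt ((((List.ofFn (herEigs (Xᴴ * X))).insertionSort (· ≥ ·)).getD k 0))

open Module
open scoped InnerProductSpace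

theorem Fin.card_filter_lt_val (n k : ℕ) :
    (Finset.univ.filter fun i : Fin n => k < (i : ℕ)).card = n - min n (k + 1) := by
  have := Finset.card_filter_add_card_filter_not (s := Finset.univ)
    fun i : Fin n => (i : ℕ) < k + 1
  rw [Fin.card_filter_val_lt, Finset.card_univ, Fintype.card_fin] at this
  simp only [not_lt, Nat.add_one_le_iff] at this
  omega

section InnerProductSpace

variable {𝕜 E F G H : Type*} [RCLike 𝕜]
  [NormedAddCommGroup E] [InnerProductSpace 𝕜 E] [FiniteDimensional 𝕜 E]
  [NormedAddCommGroup F] [InnerProductSpace 𝕜 F] [FiniteDimensional 𝕜 F]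
  [NormedAddCommGroup G] [InnerProductSpace 𝕜 G] [FiniteDimensional 𝕜 G]
  [NormedAddCommGroup H] [InnerProductSpace 𝕜 H] [FiniteDimensional 𝕜 H]

theorem exists_ne_zero_forall_inner_eq_zero {ι κ : Type*} (V : E →ₗ[𝕜] F) (u : ι → E)
    (w : κ → F) (s : Finset ι) (t : Finset κ) (hst : s.card + t.card < finrank 𝕜 E) :
    ∃ x : E, x ≠ 0 ∧ (∀ i ∈ s, ⟪u i, x⟫_𝕜 = 0) ∧ ∀ j ∈ t, ⟪w j, V x⟫_𝕜 = 0 := by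
  classical
  set S : Finset E := s.image u ∪ t.image (LinearMap.adjoint V ∘ w)
  set K := Submodule.span 𝕜 (S : Set E)
  have hS : S.card ≤ s.card + t.card :=
    (Finset.card_union_le _ _).trans (add_le_add Finset.card_image_le Finset.card_image_le)
  have hK : finrank 𝕜 K ≤ S.card := finrank_span_finset_le_card S
  have hK_ne : Kᗮ ≠ ⊥ := by
    intro hbot
    have := K.finrank_add_finrank_orthogonal
    rw [hbot, finrank_bot] at this
    omega
  obtain ⟨x, hx, hx0⟩ := Submodule.exists_mem_ne_zero_of_ne_bot hK_ne
  have hxS {v : E} (hv : v ∈ S) : ⟪v, x⟫_𝕜 = 0 :=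
    K.inner_right_of_mem_orthogonal (Submodule.subset_span hv) hx
  refine ⟨x, hx0, fun i hi => hxS (Finset.mem_union_left _ (Finset.mem_image_of_mem u hi)),
    fun j hj => ?_⟩
  rw [← LinearMap.adjoint_inner_left]
  exact hxS (Finset.mem_union_right _ (Finset.mem_image_of_mem (LinearMap.adjoint V ∘ w) hj))

namespace LinearMap

noncomputable def rightSingularBasis (T : E →ₗ[𝕜] F) :
    OrthonormalBasis (Fin (finrank 𝕜 E)) 𝕜 E :=
  T.isSymmetric_adjoint_comp_self.eigenvectorBasis rfl

theorem norm_apply_sq_eq_sum (T : E →ₗ[𝕜] F) (x : E) :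
    ‖T x‖ ^ 2 = ∑ i : Fin (finrank 𝕜 E),
      T.singularValues i ^ 2 * ‖⟪T.rightSingularBasis i, x⟫_𝕜‖ ^ 2 := by
  have hb (i) : ⟪T.rightSingularBasis i, (adjoint T ∘ₗ T) x⟫_𝕜 =
      ((T.singularValues i ^ 2 : ℝ) : 𝕜) * ⟪T.rightSingularBasis i, x⟫_𝕜 := by
    rw [← T.isSymmetric_adjoint_comp_self, rightSingularBasis,
      IsSymmetric.apply_eigenvectorBasis, inner_smul_left, RCLike.conj_ofReal,
      T.sq_singularValues_fin rfl]
  have hTx : ‖T x‖ ^ 2 = RCLike.re ⟪x, (adjoint T ∘ₗ T) x⟫_𝕜 := by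
    rw [comp_apply, adjoint_inner_right, inner_self_eq_norm_sq]
  rw [hTx, ← T.rightSingularBasis.sum_inner_mul_inner, map_sum]
  refine Finset.sum_congr rfl fun i _ => ?_
  rw [hb, mul_left_comm, ← inner_conj_symm x, RCLike.conj_mul]
  norm_cast

theorem sq_singularValues_mul_norm_sq_le_of_inner_eq_zero (T : E →ₗ[𝕜] F) {k : ℕ} {x : E}
    (hx : ∀ i : Fin (finrank 𝕜 E), k < (i : ℕ) → ⟪T.rightSingularBasis i, x⟫_𝕜 = 0) :
    T.singularValues k ^ 2 * ‖x‖ ^ 2 ≤ ‖T x‖ ^ 2 := by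
  rw [T.norm_apply_sq_eq_sum, ← T.rightSingularBasis.sum_sq_norm_inner_right, Finset.mul_sum]
  refine Finset.sum_le_sum fun i _ => ?_
  rcases lt_or_ge k i with hki | hik
  · simp [hx i hki]
  · exact mul_le_mul_of_nonneg_right (pow_le_pow_left₀ (T.singularValues_nonneg k)
      (T.singularValues_antitone hik) 2) (sq_nonneg _)

theorem norm_apply_sq_le_of_inner_eq_zero (T : E →ₗ[𝕜] F) {k : ℕ} {x : E}
    (hx : ∀ i : Fin (finrank 𝕜 E), (i : ℕ) < k → ⟪T.rightSingularBasis i, x⟫_𝕜 = 0) :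
    ‖T x‖ ^ 2 ≤ T.singularValues k ^ 2 * ‖x‖ ^ 2 := by
  rw [T.norm_apply_sq_eq_sum, ← T.rightSingularBasis.sum_sq_norm_inner_right, Finset.mul_sum]
  refine Finset.sum_le_sum fun i _ => ?_
  rcases lt_or_ge (i : ℕ) k with hik | hki
  · simp [hx i hik]
  · exact mul_le_mul_of_nonneg_right (pow_le_pow_left₀ (T.singularValues_nonneg i)
      (T.singularValues_antitone hki) 2) (sq_nonneg _)

theorem singularValues_le_of_norm_apply_le (A : F →ₗ[𝕜] G) (B : E →ₗ[𝕜] H) (V : E →ₗᵢ[𝕜] F)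
    (hAB : ∀ x, ‖B x‖ ≤ ‖A (V x)‖) (k : ℕ) : B.singularValues k ≤ A.singularValues k := by
  rcases le_or_gt (finrank 𝕜 E) k with hk | hk
  · rw [B.singularValues_of_finrank_le hk]
    exact A.singularValues_nonneg k
  obtain ⟨x, hx0, hxB, hxA⟩ := exists_ne_zero_forall_inner_eq_zero V.toLinearMap
    B.rightSingularBasis A.rightSingularBasis {i | k < (i : ℕ)} {i | (i : ℕ) < k} (by
      rw [Fin.card_filter_lt_val, Fin.card_filter_val_lt]
      omega)
  have hB := B.sq_singularValues_mul_norm_sq_le_of_inner_eq_zero fun i hi =>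
    hxB i (Finset.mem_filter.2 ⟨Finset.mem_univ i, hi⟩)
  have hA := A.norm_apply_sq_le_of_inner_eq_zero (x := V x) fun i hi =>
    hxA i (Finset.mem_filter.2 ⟨Finset.mem_univ i, hi⟩)
  rw [LinearIsometry.norm_map] at hA
  have hBA := pow_le_pow_left₀ (norm_nonneg _) (hAB x) 2
  have hx : 0 < ‖x‖ ^ 2 := by positivity
  exact (pow_le_pow_iff_left₀ (B.singularValues_nonneg k) (A.singularValues_nonneg k)
    two_ne_zero).1 (le_of_mul_le_mul_right ((hB.trans hBA).trans hA) hx)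

theorem sq_singularValues_add_le (A : F →ₗ[𝕜] G) (B : E →ₗ[𝕜] H) (V : E →ₗᵢ[𝕜] F) {r : ℕ}
    (hr : finrank 𝕜 F ≤ finrank 𝕜 E + r) {β : ℝ}
    (hAB : ∀ x, ‖A (V x)‖ ^ 2 ≤ ‖B x‖ ^ 2 + β * ‖x‖ ^ 2) {k : ℕ} (hk : k < finrank 𝕜 E) :
    A.singularValues (k + r) ^ 2 ≤ B.singularValues k ^ 2 + β := by
  obtain ⟨x, hx0, hxB, hxA⟩ := exists_ne_zero_forall_inner_eq_zero V.toLinearMap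
    B.rightSingularBasis A.rightSingularBasis {i | (i : ℕ) < k} {i | k + r < (i : ℕ)} (by
      rw [Fin.card_filter_val_lt, Fin.card_filter_lt_val]
      omega)
  have hB := B.norm_apply_sq_le_of_inner_eq_zero fun i hi =>
    hxB i (Finset.mem_filter.2 ⟨Finset.mem_univ i, hi⟩)
  have hA := A.sq_singularValues_mul_norm_sq_le_of_inner_eq_zero (x := V x) fun i hi =>
    hxA i (Finset.mem_filter.2 ⟨Finset.mem_univ i, hi⟩)
  rw [LinearIsometry.norm_map] at hA
  have hx : 0 < ‖x‖ ^ 2 := by positivity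
  refine le_of_mul_le_mul_right ?_ hx
  linarith [hAB x]

theorem norm_adjoint_apply_of_comm (A : E →ₗ[𝕜] E) (hA : A ∘ₗ adjoint A = adjoint A ∘ₗ A)
    (x : E) : ‖adjoint A x‖ = ‖A x‖ := by
  refine (pow_left_inj₀ (norm_nonneg _) (norm_nonneg _) two_ne_zero).1 ?_
  rw [← inner_self_eq_norm_sq (𝕜 := 𝕜), ← inner_self_eq_norm_sq (𝕜 := 𝕜), adjoint_inner_left,
    ← comp_apply, hA, comp_apply, adjoint_inner_right]

theorem norm_adjoint_apply_le (V : E →ₗᵢ[𝕜] F) (y : F) : ‖adjoint V.toLinearMap y‖ ≤ ‖y‖ := by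
  set x := adjoint V.toLinearMap y
  have hx : ‖x‖ ^ 2 ≤ ‖x‖ * ‖y‖ :=
    calc ‖x‖ ^ 2 = RCLike.re ⟪V.toLinearMap x, y⟫_𝕜 := by
          rw [← adjoint_inner_right, inner_self_eq_norm_sq]
      _ ≤ ‖V.toLinearMap x‖ * ‖y‖ := re_inner_le_norm _ _
      _ = ‖x‖ * ‖y‖ := by rw [LinearIsometry.coe_toLinearMap, V.norm_map]
  nlinarith [norm_nonneg x, norm_nonneg y]

theorem range_eq_orthogonal_span_singleton (V : E →ₗᵢ[𝕜] F) {h : F} (h0 : h ≠ 0)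
    (hVh : adjoint V.toLinearMap h = 0) (hdim : finrank 𝕜 F = finrank 𝕜 E + 1) :
    range V.toLinearMap = (𝕜 ∙ h)ᗮ := by
  refine Submodule.eq_of_le_of_finrank_eq ?_ ?_
  · rintro _ ⟨u, rfl⟩
    rw [Submodule.mem_orthogonal_singleton_iff_inner_right, ← adjoint_inner_left, hVh,
      inner_zero_left]
  · have := (𝕜 ∙ h).finrank_add_finrank_orthogonal
    rw [finrank_span_singleton h0] at this
    rw [finrank_range_of_inj V.injective]
    omega

theorem norm_adjoint_apply_sq_of_range_eq (V : E →ₗᵢ[𝕜] F) {h : F} (hh : ‖h‖ = 1)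
    (hV : range V.toLinearMap = (𝕜 ∙ h)ᗮ) (y : F) :
    ‖adjoint V.toLinearMap y‖ ^ 2 = ‖y‖ ^ 2 - ‖⟪h, y⟫_𝕜‖ ^ 2 := by
  set z := y - ⟪h, y⟫_𝕜 • h
  have hz : ⟪h, z⟫_𝕜 = 0 := by simp [z, inner_sub_right, inner_smul_right, hh]
  obtain ⟨w, hw⟩ : z ∈ range V.toLinearMap := by
    rw [hV, Submodule.mem_orthogonal_singleton_iff_inner_right]
    exact hz
  have hVh : adjoint V.toLinearMap h = 0 := by
    refine ext_inner_right 𝕜 fun u => ?_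
    rw [adjoint_inner_left, inner_zero_left, ← Submodule.mem_orthogonal_singleton_iff_inner_right,
      ← hV]
    exact mem_range_self _ u
  have hyz : y = z + ⟪h, y⟫_𝕜 • h := by simp [z]
  have hVy : adjoint V.toLinearMap y = w := by
    rw [hyz, map_add, map_smul, hVh, smul_zero, add_zero, ← hw, ← comp_apply,
      V.adjoint_comp_self', id_apply]
  have hpyth : ‖y‖ ^ 2 = ‖z‖ ^ 2 + ‖⟪h, y⟫_𝕜‖ ^ 2 := by
    have hzh : ⟪z, ⟪h, y⟫_𝕜 • h⟫_𝕜 = 0 := by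
      rw [inner_smul_right, inner_eq_zero_symm.1 hz, mul_zero]
    conv_lhs => rw [hyz]
    rw [@norm_add_sq 𝕜, hzh, map_zero, mul_zero, add_zero, norm_smul, hh, mul_one]
  have hw' : V w = z := hw
  rw [hVy, ← V.norm_map w, hw', hpyth]
  ring

theorem singularValues_compression_le (A : F →ₗ[𝕜] F) (V : E →ₗᵢ[𝕜] F) (k : ℕ) :
    (adjoint V.toLinearMap ∘ₗ A ∘ₗ V.toLinearMap).singularValues k ≤ A.singularValues k :=
  singularValues_le_of_norm_apply_le A _ V (fun x => norm_adjoint_apply_le V (A (V x))) k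

theorem sq_singularValues_succ_le_compression (A : F →ₗ[𝕜] F) (V : E →ₗᵢ[𝕜] F) {h : F}
    (hh : ‖h‖ = 1) (hV : range V.toLinearMap = (𝕜 ∙ h)ᗮ) {k : ℕ} (hk : k < finrank 𝕜 E) :
    A.singularValues (k + 1) ^ 2 ≤
      (adjoint V.toLinearMap ∘ₗ A ∘ₗ V.toLinearMap).singularValues k ^ 2 +
        (‖adjoint A h‖ ^ 2 - ‖⟪h, A h⟫_𝕜‖ ^ 2) := by
  have hdim : finrank 𝕜 F ≤ finrank 𝕜 E + 1 := by
    have := (𝕜 ∙ h).finrank_add_finrank_orthogonal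
    rw [finrank_span_singleton (norm_ne_zero_iff.1 (hh ▸ one_ne_zero)), ← hV,
      finrank_range_of_inj V.injective] at this
    omega
  refine sq_singularValues_add_le A _ V hdim (fun x => ?_) hk
  set u := adjoint V.toLinearMap (adjoint A h)
  have hu : ‖u‖ ^ 2 = ‖adjoint A h‖ ^ 2 - ‖⟪h, A h⟫_𝕜‖ ^ 2 := by
    rw [norm_adjoint_apply_sq_of_range_eq V hh hV, adjoint_inner_right, ← inner_conj_symm,
      RCLike.norm_conj]
  have hinner : ⟪h, A (V x)⟫_𝕜 = ⟪u, x⟫_𝕜 := by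
    rw [adjoint_inner_left, adjoint_inner_left, LinearIsometry.coe_toLinearMap]
  have hcs : ‖⟪u, x⟫_𝕜‖ ^ 2 ≤ ‖u‖ ^ 2 * ‖x‖ ^ 2 := by
    rw [← mul_pow]
    exact pow_le_pow_left₀ (norm_nonneg _) (norm_inner_le_norm u x) 2
  have hB : ‖(adjoint V.toLinearMap ∘ₗ A ∘ₗ V.toLinearMap) x‖ ^ 2 =
      ‖A (V x)‖ ^ 2 - ‖⟪h, A (V x)⟫_𝕜‖ ^ 2 :=
    norm_adjoint_apply_sq_of_range_eq V hh hV (A (V x))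
  rw [hB, hinner, ← hu]
  linarith

end LinearMap

end InnerProductSpace

theorem EuclideanSpace.norm_toLp_sq {𝕜 ι : Type*} [RCLike 𝕜] [Fintype ι] (x : ι → 𝕜) :
    ‖WithLp.toLp 2 x‖ ^ 2 = RCLike.re (star x ⬝ᵥ x) := by
  rw [← inner_self_eq_norm_sq (𝕜 := 𝕜), EuclideanSpace.inner_toLp_toLp, dotProduct_comm]

section Matrix

variable {𝕜 m n : Type*} [RCLike 𝕜] [Fintype m] [Fintype n] [DecidableEq m] [DecidableEq n]

theorem Matrix.toEuclideanLin_conjTranspose_mul_mul (V : Matrix m n 𝕜) (A : Matrix m m 𝕜) :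
    toEuclideanLin (Vᴴ * A * V) =
      LinearMap.adjoint (toEuclideanLin V) ∘ₗ toEuclideanLin A ∘ₗ toEuclideanLin V := by
  rw [toLpLin_mul_same, toLpLin_mul_same, toEuclideanLin_conjTranspose_eq_adjoint]
  rfl

noncomputable def Matrix.toEuclideanIsometry (V : Matrix m n 𝕜) (hV : Vᴴ * V = 1) :
    EuclideanSpace 𝕜 n →ₗᵢ[𝕜] EuclideanSpace 𝕜 m where
  toLinearMap := toEuclideanLin V
  norm_map' x := by
    refine (pow_left_inj₀ (norm_nonneg _) (norm_nonneg _) two_ne_zero).1 ?_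
    rw [← inner_self_eq_norm_sq (𝕜 := 𝕜), ← LinearMap.adjoint_inner_right,
      ← LinearMap.comp_apply, ← toEuclideanLin_conjTranspose_eq_adjoint, ← toLpLin_mul_same, hV,
      toLpLin_one, LinearMap.id_apply, inner_self_eq_norm_sq]

theorem Matrix.toEuclideanIsometry_toLinearMap (V : Matrix m n 𝕜) (hV : Vᴴ * V = 1) :
    (V.toEuclideanIsometry hV).toLinearMap = toEuclideanLin V :=
  rfl

theorem Matrix.range_toEuclideanIsometry (V : Matrix m n 𝕜) (hV : Vᴴ * V = 1) {h : m → 𝕜}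
    (h0 : h ≠ 0) (hVh : Vᴴ *ᵥ h = 0) (hcard : Fintype.card m = Fintype.card n + 1) :
    LinearMap.range (V.toEuclideanIsometry hV).toLinearMap = (𝕜 ∙ WithLp.toLp 2 h)ᗮ := by
  refine LinearMap.range_eq_orthogonal_span_singleton _ (by simpa using h0) ?_
    (by simpa using hcard)
  rw [Matrix.toEuclideanIsometry_toLinearMap, ← toEuclideanLin_conjTranspose_eq_adjoint,
    toLpLin_toLp, Matrix.toLin'_apply, hVh, WithLp.toLp_zero]

theorem Matrix.norm_adjoint_toEuclideanLin_apply_sq (A : Matrix n n 𝕜) (hA : A * Aᴴ = Aᴴ * A)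
    (x : n → 𝕜) :
    ‖LinearMap.adjoint (toEuclideanLin A) (WithLp.toLp 2 x)‖ ^ 2 =
      RCLike.re (star (A *ᵥ x) ⬝ᵥ (A *ᵥ x)) := by
  have hnormal : toEuclideanLin A ∘ₗ LinearMap.adjoint (toEuclideanLin A) =
      LinearMap.adjoint (toEuclideanLin A) ∘ₗ toEuclideanLin A := by
    rw [← toEuclideanLin_conjTranspose_eq_adjoint, ← toLpLin_mul_same, ← toLpLin_mul_same, hA]
  rw [LinearMap.norm_adjoint_apply_of_comm _ hnormal, toLpLin_toLp, Matrix.toLin'_apply,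
    EuclideanSpace.norm_toLp_sq]

end Matrix

theorem sval_eq_singularValues {e : ℕ} (X : Matrix (Fin e) (Fin e) ℂ) (k : ℕ) :
    sval X k = (toEuclideanLin X).singularValues k := by
  set T := toEuclideanLin X
  have hS := T.isSymmetric_adjoint_comp_self
  have hM : (Xᴴ * X).IsHermitian := isHermitian_conjTranspose_mul_self X
  have hT : (LinearMap.adjoint T ∘ₗ T).charpoly = (Xᴴ * X).charpoly := by
    rw [← toEuclideanLin_conjTranspose_eq_adjoint, ← toLpLin_mul_same, toLpLin_eq_toLin,
      Matrix.charpoly_toLin]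
  -- `herEigs` lists the eigenvalues in no particular order; both sides are the sorted roots of
  -- the characteristic polynomial.
  have hsort : (List.ofFn (herEigs (Xᴴ * X))).insertionSort (· ≥ ·) =
      List.ofFn (hS.eigenvalues finrank_euclideanSpace_fin) := by
    rw [← hS.sort_roots_charpoly_eq_eigenvalues, hT, hM.roots_charpoly_eq_eigenvalues,
      Multiset.map_map, herEigs, dif_pos hM]
    simp [Fin.univ_val_map, List.mergeSort_eq_insertionSort]
  rw [sval, hsort]
  rcases lt_or_ge k e with hk | hk
  · rw [T.singularValues_of_lt finrank_euclideanSpace_fin hk,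
      List.getD_eq_getElem _ _ (by simpa), List.getElem_ofFn]
  · rw [T.singularValues_of_finrank_le (by simpa), List.getD_eq_default _ _ (by simpa)]
    simp

/-- **Singular values of the compression of a normal matrix onto a hyperplane
(Bourin–Lee).** Let `A ∈ M_d(ℂ)` be normal, `h` a unit vector, and `V` an
isometric parametrization of the hyperplane `S = h^⊥` (so `VᴴV = I` and the
columns of `V` are orthogonal to `h`); let `A_S = Vᴴ A V` be the compression
of `A` to `S` and `β = ‖Ah‖² − |⟨h, Ah⟩|²`. Then for each `j = 1, …, d−1`
(here `k = j − 1` is the `0`-based index),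
`μ_j(A)² ≥ μ_j(A_S)² ≥ μ_{j+1}(A)² − β`. -/
theorem sval_compression_hyperplane {d : ℕ}
    (A : Matrix (Fin d) (Fin d) ℂ) (hA : A * Aᴴ = Aᴴ * A)
    (h : Fin d → ℂ) (hh : star h ⬝ᵥ h = 1)
    (V : Matrix (Fin d) (Fin (d - 1)) ℂ) (hV : Vᴴ * V = 1) (hVh : Vᴴ *ᵥ h = 0) :
    ∀ k : ℕ, k < d - 1 →
      sval (Vᴴ * A * V) k ^ 2 ≤ sval A k ^ 2 ∧
      sval A (k + 1) ^ 2 -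
          ((star (A *ᵥ h) ⬝ᵥ (A *ᵥ h)).re - ‖star h ⬝ᵥ (A *ᵥ h)‖ ^ 2) ≤
        sval (Vᴴ * A * V) k ^ 2 := by
  intro k hk
  set 𝒜 := toEuclideanLin A
  set 𝒱 := V.toEuclideanIsometry hV
  set h' : EuclideanSpace ℂ (Fin d) := WithLp.toLp 2 h
  have hh' : ‖h'‖ = 1 := by
    refine (pow_left_inj₀ (norm_nonneg _) zero_le_one two_ne_zero).1 ?_
    rw [EuclideanSpace.norm_toLp_sq, hh, one_pow, RCLike.one_re]
  have hrange : LinearMap.range 𝒱.toLinearMap = (ℂ ∙ h')ᗮ :=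
    V.range_toEuclideanIsometry hV (by rintro rfl; simp at hh) hVh
      (by simp only [Fintype.card_fin]; omega)
  have hβ : (star (A *ᵥ h) ⬝ᵥ (A *ᵥ h)).re - ‖star h ⬝ᵥ (A *ᵥ h)‖ ^ 2 =
      ‖LinearMap.adjoint 𝒜 h'‖ ^ 2 - ‖⟪h', 𝒜 h'⟫_ℂ‖ ^ 2 := by
    rw [A.norm_adjoint_toEuclideanLin_apply_sq hA, toLpLin_toLp, Matrix.toLin'_apply,
      EuclideanSpace.inner_toLp_toLp, dotProduct_comm (A *ᵥ h)]
    rfl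
  have hB : toEuclideanLin (Vᴴ * A * V) =
      LinearMap.adjoint 𝒱.toLinearMap ∘ₗ 𝒜 ∘ₗ 𝒱.toLinearMap :=
    Matrix.toEuclideanLin_conjTranspose_mul_mul V A
  simp only [sval_eq_singularValues, hB, hβ]
  refine ⟨pow_le_pow_left₀ (LinearMap.singularValues_nonneg _ _)
    (LinearMap.singularValues_compression_le 𝒜 𝒱 k) 2, ?_⟩
  have := LinearMap.sq_singularValues_succ_le_compression 𝒜 𝒱 hh' hrange (k := k)
    (by simpa using hk)
  linarith
end
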